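/- arXiv:1411.7581 — 4 statements merged into one kernel-verified Lean document; each statement's English description precedes it below -/
import Mathlib

section
/- The set Ω on which the supremum defining Λ is attained equals the topological interior of the (k−1)-polytope 𝒫 (the convex hull of the points Ā_π, π ∈ Π). -/
open Finset

/-- The set Π of injective maps from {1,…,k−1} into {1,…,k}
(the first k−1 values of permutations of {1,…,k}); it has cardinality k!. -/
noncomputable def Pis (k : ℕ) : Finset (Fin (k - 1) → Fin k) :=
  Finset.univ.filter Function.Injective

/-- The averaged cumulant generating function κ. -/
noncomputable def kappa (b k : ℕ) (a : Fin b → Fin k → ℝ) (t : Fin (k - 1) → ℝ) : ℝ :=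
  (b : ℝ)⁻¹ * ∑ i : Fin b, Real.log ((k.factorial : ℝ)⁻¹ *
    ∑ π ∈ Pis k, Real.exp (∑ j : Fin (k - 1), t j * a i (π j)))

/-- The quantity tᵀx − κ(t) whose supremum over t defines Λ(x). -/
noncomputable def lamArg (b k : ℕ) (a : Fin b → Fin k → ℝ) (x t : Fin (k - 1) → ℝ) : ℝ :=
  (∑ j : Fin (k - 1), t j * x j) - kappa b k a t

/-- Λ(x) = sup_t ( tᵀx − κ(t) ), valued in ℝ ∪ {+∞} (EReal). -/
noncomputable def Lam (b k : ℕ) (a : Fin b → Fin k → ℝ) (x : Fin (k - 1) → ℝ) : EReal :=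
  ⨆ t : Fin (k - 1) → ℝ, ((lamArg b k a x t : ℝ) : EReal)

/-- The admissible domain Ω: points x at which the supremum defining Λ(x) is attained. -/
def Omega (b k : ℕ) (a : Fin b → Fin k → ℝ) : Set (Fin (k - 1) → ℝ) :=
  {x | ∃ t : Fin (k - 1) → ℝ, ∀ s : Fin (k - 1) → ℝ, lamArg b k a x s ≤ lamArg b k a x t}

/-- The column means Ā_j of the matrix A. -/
noncomputable def Abar (b k : ℕ) (a : Fin b → Fin k → ℝ) (j : Fin k) : ℝ :=
  (b : ℝ)⁻¹ * ∑ i : Fin b, a i j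

/-- The vertex Ā_π = (Ā_{π(1)}, …, Ā_{π(k−1)}). -/
noncomputable def AbarPi (b k : ℕ) (a : Fin b → Fin k → ℝ) (π : Fin (k - 1) → Fin k) :
    Fin (k - 1) → ℝ :=
  fun j => Abar b k a (π j)

/-- The polytope 𝒫, the convex hull of the points Ā_π for π ∈ Π. -/
noncomputable def PolyP (b k : ℕ) (a : Fin b → Fin k → ℝ) : Set (Fin (k - 1) → ℝ) :=
  convexHull ℝ {x | ∃ π ∈ Pis k, AbarPi b k a π = x}


def emb (k : ℕ) : Fin (k - 1) → Fin k := Fin.castLE (Nat.sub_le k 1)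

lemma emb_inj (k : ℕ) : Function.Injective (emb k) := Fin.castLE_injective _

lemma mem_Pis {k : ℕ} {π : Fin (k - 1) → Fin k} : π ∈ Pis k ↔ Function.Injective π := by
  simp [Pis]

lemma emb_mem_Pis (k : ℕ) : emb k ∈ Pis k := mem_Pis.2 (emb_inj k)

noncomputable def chat (k : ℕ) (c : Fin (k - 1) → ℝ) : Fin k → ℝ :=
  fun l => if h : (l : ℕ) < k - 1 then c ⟨l, h⟩ else 0

lemma chat_emb (k : ℕ) (c : Fin (k - 1) → ℝ) (j : Fin (k - 1)) :
    chat k c (emb k j) = c j := by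
  simp [chat, emb, Fin.castLE]

lemma sum_chat (k : ℕ) (c : Fin (k - 1) → ℝ) (h : Fin k → ℝ) :
    ∑ l, chat k c l * h l = ∑ j, c j * h (emb k j) := by
  classical
  have h1 : ∑ l, chat k c l * h l
      = ∑ l ∈ Finset.univ.image (emb k), chat k c l * h l := by
    refine (Finset.sum_subset (Finset.subset_univ _) ?_).symm
    intro l _ hl
    have : ¬ ((l : ℕ) < k - 1) := by
      intro hlt
      exact hl (Finset.mem_image.2 ⟨⟨l, hlt⟩, Finset.mem_univ _, Fin.ext rfl⟩)
    simp [chat, this]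
  have h2 : ∑ l ∈ Finset.univ.image (emb k), chat k c l * h l
      = ∑ j, chat k c (emb k j) * h (emb k j) :=
    Finset.sum_image (fun x _ y _ hxy => emb_inj k hxy)
  rw [h1, h2]
  exact Finset.sum_congr rfl fun j _ => by rw [chat_emb]

lemma exists_perm_extend {k : ℕ} {π : Fin (k - 1) → Fin k}
    (hπ : Function.Injective π) :
    ∃ φ : Equiv.Perm (Fin k), ∀ j, φ (emb k j) = π j := by
  classical
  have hcard : (Finset.univ.image π).card = k - 1 := by
    rw [Finset.card_image_of_injective _ hπ, Finset.card_univ, Fintype.card_fin]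
  by_cases hk0 : k = 0
  · subst hk0; exact ⟨Equiv.refl _, fun j => Fin.elim0 (emb 0 j)⟩
  have hne : ((Finset.univ.image π)ᶜ : Finset (Fin k)).Nonempty := by
    rw [← Finset.card_pos, Finset.card_compl, hcard, Fintype.card_fin]
    omega
  obtain ⟨m, hm⟩ := hne
  have hmnr : ∀ j, π j ≠ m := by
    intro j hj
    rw [Finset.mem_compl] at hm
    exact hm (Finset.mem_image.2 ⟨j, Finset.mem_univ _, hj⟩)
  set f : Fin k → Fin k := fun l => if h : (l : ℕ) < k - 1 then π ⟨l, h⟩ else m with hf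
  have hfinj : Function.Injective f := by
    intro l l' hll
    by_cases h1 : (l : ℕ) < k - 1 <;> by_cases h2 : (l' : ℕ) < k - 1 <;>
      simp only [hf, h1, h2, dif_pos, dif_neg, not_false_iff] at hll
    · have h3 := congrArg Fin.val (hπ hll)
      simp only [Fin.val_mk] at h3
      exact Fin.ext h3
    · exact absurd hll (hmnr _)
    · exact absurd hll.symm (hmnr _)
    · exact Fin.ext (by omega)
  refine ⟨Equiv.ofBijective f ((Finite.injective_iff_bijective).1 hfinj), fun j => ?_⟩
  show f (emb k j) = π j
  have hlt : ((emb k j : Fin k) : ℕ) < k - 1 := j.isLt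
  simp only [hf, dif_pos hlt]
  exact congrArg π (Fin.ext rfl)

lemma exists_max_pi {b k : ℕ} (a : Fin b → Fin k → ℝ)
    (ha : ∀ i, StrictMono (a i)) (c : Fin (k - 1) → ℝ) :
    ∃ πs ∈ Pis k, ∀ (i : Fin b), ∀ π ∈ Pis k,
      (∑ j, c j * a i (π j)) ≤ ∑ j, c j * a i (πs j) := by
  classical
  set ρ : Equiv.Perm (Fin k) := Tuple.sort (chat k c) with hρ
  have hmono : Monotone (chat k c ∘ ρ) := Tuple.monotone_sort (chat k c)
  set πs : Fin (k - 1) → Fin k := fun j => ρ⁻¹ (emb k j) with hπs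
  have hπsinj : Function.Injective πs := fun x y h => emb_inj k (ρ⁻¹.injective h)
  refine ⟨πs, mem_Pis.2 hπsinj, ?_⟩
  intro i π hπ
  have key : ∀ φ : Equiv.Perm (Fin k),
      (∑ l, chat k c l * a i (φ l)) ≤ ∑ l, chat k c l * a i (ρ⁻¹ l) := by
    intro φ
    have hmon : Monovary (chat k c ∘ ρ) (a i) := by
      intro l l' hll
      exact hmono ((ha i).lt_iff_lt.1 hll).le
    have h1 := hmon.sum_smul_comp_perm_le_sum_smul (σ := ρ.trans φ)
    have hL : (∑ l, (chat k c ∘ ρ) l • a i ((ρ.trans φ) l))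
        = ∑ l, chat k c l * a i (φ l) := by
      rw [Fintype.sum_bijective ρ ρ.bijective _ (fun m => chat k c m * a i (φ m))
        (fun l => by simp [Equiv.trans_apply])]
    have hR : (∑ l, (chat k c ∘ ρ) l • a i l)
        = ∑ l, chat k c l * a i (ρ⁻¹ l) := by
      rw [Fintype.sum_bijective ρ ρ.bijective _ (fun m => chat k c m * a i (ρ⁻¹ m))
        (fun l => by simp)]
    rw [hL, hR] at h1
    exact h1
  obtain ⟨φ, hφ⟩ := exists_perm_extend (mem_Pis.1 hπ)
  have e1 : (∑ j, c j * a i (π j)) = ∑ l, chat k c l * a i (φ l) := by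
    rw [sum_chat k c (fun l => a i (φ l))]
    exact Finset.sum_congr rfl fun j _ => by rw [hφ]
  have e2 : (∑ j, c j * a i (πs j)) = ∑ l, chat k c l * a i (ρ⁻¹ l) := by
    rw [sum_chat k c (fun l => a i (ρ⁻¹ l))]
  rw [e1, e2]
  exact key φ

section Part2

variable {b k : ℕ} (a : Fin b → Fin k → ℝ)

lemma Pis_nonempty (k : ℕ) : (Pis k).Nonempty := ⟨emb k, emb_mem_Pis k⟩

lemma sum_exp_pos (k : ℕ) (f : (Fin (k - 1) → Fin k) → ℝ) :
    0 < ∑ π ∈ Pis k, Real.exp (f π) :=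
  Finset.sum_pos (fun π _ => Real.exp_pos _) (Pis_nonempty k)

lemma exp_single_le (k : ℕ) (f : (Fin (k - 1) → Fin k) → ℝ) {π : Fin (k - 1) → Fin k}
    (hπ : π ∈ Pis k) : Real.exp (f π) ≤ ∑ π' ∈ Pis k, Real.exp (f π') :=
  Finset.single_le_sum (f := fun π' => Real.exp (f π')) (fun π' _ => (Real.exp_pos _).le) hπ

lemma kfac_inv_pos (k : ℕ) : (0 : ℝ) < (k.factorial : ℝ)⁻¹ := by
  positivity

set_option maxHeartbeats 1000000 in
lemma log_term_ge (i : Fin b) (t : Fin (k - 1) → ℝ) {π : Fin (k - 1) → Fin k}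
    (hπ : π ∈ Pis k) :
    (∑ j, t j * a i (π j)) - Real.log (k.factorial : ℝ) ≤
      Real.log ((k.factorial : ℝ)⁻¹ *
        ∑ π' ∈ Pis k, Real.exp (∑ j, t j * a i (π' j))) := by
  have h1 : Real.exp (∑ j, t j * a i (π j)) ≤
      ∑ π' ∈ Pis k, Real.exp (∑ j, t j * a i (π' j)) :=
    exp_single_le k (fun π' => ∑ j, t j * a i (π' j)) hπ
  have h2 : (k.factorial : ℝ)⁻¹ * Real.exp (∑ j, t j * a i (π j)) ≤
      (k.factorial : ℝ)⁻¹ * ∑ π' ∈ Pis k, Real.exp (∑ j, t j * a i (π' j)) :=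
    mul_le_mul_of_nonneg_left h1 (kfac_inv_pos k).le
  have h3 := Real.log_le_log (by positivity) h2
  rw [Real.log_mul (by positivity) (Real.exp_ne_zero _), Real.log_exp,
    Real.log_inv] at h3
  linarith

lemma dot_AbarPi (hb : 1 ≤ b) (t : Fin (k - 1) → ℝ) (π : Fin (k - 1) → Fin k) :
    (∑ j, t j * AbarPi b k a π j) = (b : ℝ)⁻¹ * ∑ i, ∑ j, t j * a i (π j) :=
  calc (∑ j, t j * AbarPi b k a π j)
      = ∑ j, ∑ i, (b : ℝ)⁻¹ * (t j * a i (π j)) := by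
        simp only [AbarPi, Abar, Finset.mul_sum]
        exact Finset.sum_congr rfl fun j _ => Finset.sum_congr rfl fun i _ => by ring
    _ = ∑ i, ∑ j, (b : ℝ)⁻¹ * (t j * a i (π j)) := Finset.sum_comm
    _ = (b : ℝ)⁻¹ * ∑ i, ∑ j, t j * a i (π j) := by
        rw [Finset.mul_sum]
        exact Finset.sum_congr rfl fun i _ => (Finset.mul_sum _ _ _).symm

lemma kappa_ge (hb : 1 ≤ b) (t : Fin (k - 1) → ℝ) {π : Fin (k - 1) → Fin k}
    (hπ : π ∈ Pis k) :
    (∑ j, t j * AbarPi b k a π j) - Real.log (k.factorial : ℝ) ≤ kappa b k a t := by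
  have hb' : (0 : ℝ) < (b : ℝ) := by exact_mod_cast hb
  have h1 : ∑ i : Fin b, ((∑ j, t j * a i (π j)) - Real.log (k.factorial : ℝ)) ≤
      ∑ i : Fin b, Real.log ((k.factorial : ℝ)⁻¹ *
        ∑ π' ∈ Pis k, Real.exp (∑ j, t j * a i (π' j))) :=
    Finset.sum_le_sum fun i _ => log_term_ge a i t hπ
  rw [Finset.sum_sub_distrib, Finset.sum_const, Finset.card_univ, Fintype.card_fin,
    nsmul_eq_mul] at h1
  have h2 := mul_le_mul_of_nonneg_left h1 (inv_pos.2 hb').le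
  rw [mul_sub, ← mul_assoc, inv_mul_cancel₀ hb'.ne', one_mul,
    ← dot_AbarPi a hb] at h2
  exact h2

lemma inner_cont (i : Fin b) (π : Fin (k - 1) → Fin k) :
    Continuous fun t : Fin (k - 1) → ℝ => ∑ j, t j * a i (π j) :=
  continuous_finset_sum _ fun j _ => (continuous_apply j).mul continuous_const

lemma kappa_cont : Continuous (kappa b k a) := by
  refine continuous_const.mul (continuous_finset_sum _ fun i _ => ?_)
  refine Continuous.log ?_ fun t => ?_
  · exact continuous_const.mul (continuous_finset_sum _ fun π _ =>
      (inner_cont a i π).rexp)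
  · have := sum_exp_pos k (fun π => ∑ j, t j * a i (π j))
    positivity

lemma lamArg_cont (x : Fin (k - 1) → ℝ) : Continuous (lamArg b k a x) := by
  refine Continuous.sub ?_ (kappa_cont a)
  exact continuous_finset_sum _ fun j _ => (continuous_apply j).mul continuous_const

lemma dot_le_on_polyP (hb : 1 ≤ b) (t : Fin (k - 1) → ℝ) {πs : Fin (k - 1) → Fin k}
    (hmax : ∀ (i : Fin b), ∀ π ∈ Pis k,
      (∑ j, t j * a i (π j)) ≤ ∑ j, t j * a i (πs j)) :
    ∀ y ∈ PolyP b k a, (∑ j, t j * y j) ≤ ∑ j, t j * AbarPi b k a πs j := by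
  have hlin : IsLinearMap ℝ (fun y : Fin (k - 1) → ℝ => ∑ j, t j * y j) := by
    constructor
    · intro y z; rw [← Finset.sum_add_distrib]
      exact Finset.sum_congr rfl fun j _ => by simp [Pi.add_apply]; ring
    · intro r y
      simp only [Pi.smul_apply, smul_eq_mul, Finset.mul_sum]
      exact Finset.sum_congr rfl fun j _ => by ring
  intro y hy
  refine convexHull_min ?_ (convex_halfSpace_le hlin _) hy
  rintro z ⟨π, hπ, rfl⟩
  show (∑ j, t j * AbarPi b k a π j) ≤ ∑ j, t j * AbarPi b k a πs j
  rw [dot_AbarPi a hb, dot_AbarPi a hb]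
  exact mul_le_mul_of_nonneg_left
    (Finset.sum_le_sum fun i _ => hmax i π hπ) (by positivity)

end Part2

section Part3

variable {b k : ℕ} (a : Fin b → Fin k → ℝ)

lemma sign_helpers (z : ℝ) : z * Real.sign z = |z| ∧ |Real.sign z| ≤ 1 := by
  rcases lt_trichotomy z 0 with h | h | h
  · rw [Real.sign_of_neg h, abs_of_neg h]; constructor <;> simp
  · subst h; simp [Real.sign_zero]
  · rw [Real.sign_of_pos h, abs_of_pos h]; constructor <;> simp

lemma norm_le_sum_abs (n : ℕ) (t : Fin n → ℝ) : ‖t‖ ≤ ∑ j, |t j| := by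
  rw [pi_norm_le_iff_of_nonneg (by positivity)]
  intro i
  rw [Real.norm_eq_abs]
  exact Finset.single_le_sum (f := fun j => |t j|) (fun j _ => abs_nonneg _) (Finset.mem_univ i)

lemma interior_subset_Omega (hb : 1 ≤ b) (hk : 2 ≤ k)
    (ha : ∀ i, StrictMono (a i)) : interior (PolyP b k a) ⊆ Omega b k a := by
  intro x hx
  obtain ⟨ε, hε, hball⟩ := Metric.isOpen_iff.1 isOpen_interior x hx
  have hballP : Metric.ball x ε ⊆ PolyP b k a := hball.trans interior_subset
  set C : ℝ := Real.log (k.factorial : ℝ) with hC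
  have hcoer : ∀ t, lamArg b k a x t ≤ C - ε / 2 * ‖t‖ := by
    intro t
    obtain ⟨πs, hπs, hmax⟩ := exists_max_pi a ha t
    set y : Fin (k - 1) → ℝ := fun j => x j + ε / 2 * Real.sign (t j) with hy
    have hymem : y ∈ PolyP b k a := by
      apply hballP
      rw [Metric.mem_ball, dist_eq_norm]
      have : ‖y - x‖ ≤ ε / 2 := by
        rw [pi_norm_le_iff_of_nonneg (by positivity)]
        intro j
        have hsub : (y - x) j = ε / 2 * Real.sign (t j) := by simp [hy]
        rw [hsub, Real.norm_eq_abs, abs_mul, abs_of_pos (by positivity : (0:ℝ) < ε / 2)]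
        calc ε / 2 * |Real.sign (t j)| ≤ ε / 2 * 1 :=
              mul_le_mul_of_nonneg_left (sign_helpers (t j)).2 (by positivity)
          _ = ε / 2 := mul_one _
      linarith
    have h1 : (∑ j, t j * y j) ≤ ∑ j, t j * AbarPi b k a πs j :=
      dot_le_on_polyP a hb t hmax y hymem
    have h2 : (∑ j, t j * y j) = (∑ j, t j * x j) + ε / 2 * ∑ j, |t j| := by
      simp only [hy, mul_add, Finset.sum_add_distrib, Finset.mul_sum]
      congr 1
      exact Finset.sum_congr rfl fun j _ => by
        rw [← (sign_helpers (t j)).1]; ring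
    have h4 : ε / 2 * ‖t‖ ≤ ε / 2 * ∑ j, |t j| :=
      mul_le_mul_of_nonneg_left (norm_le_sum_abs _ t) (by positivity)
    have h5 := kappa_ge a hb t hπs
    rw [lamArg]
    linarith
  set L0 : ℝ := lamArg b k a x 0 with hL0
  set R : ℝ := max 0 ((C - L0 + 1) * (2 / ε)) with hR
  have hR0 : (0 : ℝ) ≤ R := le_max_left _ _
  obtain ⟨t₀, ht₀mem, ht₀⟩ := (isCompact_closedBall (0 : Fin (k - 1) → ℝ) R).exists_isMaxOn
    ⟨0, Metric.mem_closedBall_self hR0⟩ ((lamArg_cont a x).continuousOn)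
  refine ⟨t₀, fun s => ?_⟩
  by_cases hs : s ∈ Metric.closedBall (0 : Fin (k - 1) → ℝ) R
  · exact ht₀ hs
  · have h6 : R < ‖s‖ := by
      simpa [Metric.mem_closedBall, dist_zero_right, not_le] using hs
    have h7 := hcoer s
    have h8 : L0 ≤ lamArg b k a x t₀ := ht₀ (Metric.mem_closedBall_self hR0)
    have h9 : ε / 2 * ((C - L0 + 1) * (2 / ε)) = C - L0 + 1 := by
      field_simp
    have h10 : ε / 2 * ((C - L0 + 1) * (2 / ε)) ≤ ε / 2 * R :=
      mul_le_mul_of_nonneg_left (le_max_right _ _) (by positivity)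
    have h11 : ε / 2 * R < ε / 2 * ‖s‖ :=
      mul_lt_mul_of_pos_left h6 (by positivity)
    linarith

end Part3

section Part4

variable {b k : ℕ} (a : Fin b → Fin k → ℝ)

lemma Abar_strictMono (hb : 1 ≤ b) (ha : ∀ i, StrictMono (a i)) :
    StrictMono (Abar b k a) := by
  haveI : Nonempty (Fin b) := ⟨⟨0, hb⟩⟩
  intro j j' h
  have hsum : (∑ i, a i j) < ∑ i, a i j' :=
    Finset.sum_lt_sum_of_nonempty Finset.univ_nonempty fun i _ => ha i h
  have hb' : (0 : ℝ) < (b : ℝ)⁻¹ := by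
    have : (0 : ℝ) < (b : ℝ) := by exact_mod_cast hb
    positivity
  exact mul_lt_mul_of_pos_left hsum hb'

lemma interiorP_nonempty (hb : 1 ≤ b) (hk : 2 ≤ k) (ha : ∀ i, StrictMono (a i)) :
    (interior (PolyP b k a)).Nonempty := by
  classical
  rw [PolyP, interior_convexHull_nonempty_iff_affineSpan_eq_top]
  set V : Set (Fin (k - 1) → ℝ) := {x | ∃ π ∈ Pis k, AbarPi b k a π = x} with hV
  have hVne : V.Nonempty := ⟨AbarPi b k a (emb k), emb k, emb_mem_Pis k, rfl⟩
  rw [AffineSubspace.affineSpan_eq_top_iff_vectorSpan_eq_top_of_nonempty ℝ (Fin (k-1) → ℝ) (Fin (k-1) → ℝ) hVne]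
  have he : ∀ j0 : Fin (k - 1),
      (fun j => if j0 = j then (1 : ℝ) else 0) ∈ vectorSpan ℝ V := by
    intro j0
    set lk : Fin k := ⟨k - 1, by omega⟩ with hlk
    set π2 : Fin (k - 1) → Fin k := Function.update (emb k) j0 lk with hπ2
    have hπ2inj : Function.Injective π2 := by
      intro u v huv
      by_cases hu : u = j0 <;> by_cases hv : v = j0
      · rw [hu, hv]
      · exfalso
        rw [hπ2, hu, Function.update_self, Function.update_of_ne hv] at huv
        have h1 : ((emb k v : Fin k) : ℕ) = k - 1 := by rw [← huv]
        have h2 := v.isLt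
        simp only [emb, Fin.coe_castLE] at h1
        omega
      · exfalso
        rw [hπ2, hv, Function.update_self, Function.update_of_ne hu] at huv
        have h1 : ((emb k u : Fin k) : ℕ) = k - 1 := by rw [huv]
        have h2 := u.isLt
        simp only [emb, Fin.coe_castLE] at h1
        omega
      · rw [hπ2, Function.update_of_ne hu, Function.update_of_ne hv] at huv
        exact emb_inj k huv
    have hm1 : AbarPi b k a (emb k) ∈ V := ⟨emb k, emb_mem_Pis k, rfl⟩
    have hm2 : AbarPi b k a π2 ∈ V := ⟨π2, mem_Pis.2 hπ2inj, rfl⟩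
    set d : ℝ := Abar b k a (emb k j0) - Abar b k a lk with hd
    have hdneg : d < 0 := by
      have hlt : emb k j0 < lk := by
        have := j0.isLt
        simp only [Fin.lt_def, emb, Fin.coe_castLE, hlk]
        omega
      have := Abar_strictMono a hb ha hlt
      rw [hd]
      linarith
    have hdne : d ≠ 0 := ne_of_lt hdneg
    have hvdiff : AbarPi b k a (emb k) - AbarPi b k a π2
        = d • (fun j => if j0 = j then (1 : ℝ) else 0) := by
      funext j
      by_cases hj : j = j0
      · subst hj
        simp [AbarPi, hπ2, Function.update_self, hd]
      · have : ¬ (j0 = j) := fun hc => hj hc.symm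
        simp [AbarPi, hπ2, Function.update_of_ne hj, this]
    have hmem : AbarPi b k a (emb k) - AbarPi b k a π2 ∈ vectorSpan ℝ V := by
      have := vsub_mem_vectorSpan ℝ hm1 hm2
      simpa [vsub_eq_sub] using this
    have heq : (fun j => if j0 = j then (1 : ℝ) else 0)
        = d⁻¹ • (AbarPi b k a (emb k) - AbarPi b k a π2) := by
      rw [hvdiff, smul_smul, inv_mul_cancel₀ hdne, one_smul]
    rw [heq]
    exact Submodule.smul_mem _ _ hmem
  rw [Submodule.eq_top_iff']
  intro t
  have hmem := Submodule.sum_mem (vectorSpan ℝ V)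
    (fun j0 (_ : j0 ∈ Finset.univ) => Submodule.smul_mem _ (t j0) (he j0))
  rwa [← pi_eq_sum_univ t] at hmem

end Part4

section Part5

variable {b k : ℕ} (a : Fin b → Fin k → ℝ)

/-- derivative of lamArg along a line -/
lemma lamArg_line_hasDerivAt (x c t₀ : Fin (k - 1) → ℝ) :
    HasDerivAt (fun s : ℝ => lamArg b k a x (t₀ + s • c))
      ((∑ j, c j * x j) - (b : ℝ)⁻¹ * ∑ i,
        (∑ π ∈ Pis k, Real.exp (∑ j, t₀ j * a i (π j)) * (∑ j, c j * a i (π j))) /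
        (∑ π ∈ Pis k, Real.exp (∑ j, t₀ j * a i (π j)))) 0 := by
  classical
  have hfun : (fun s : ℝ => lamArg b k a x (t₀ + s • c))
      = fun s : ℝ => (∑ j, (t₀ j + s * c j) * x j) -
        (b : ℝ)⁻¹ * ∑ i, Real.log ((k.factorial : ℝ)⁻¹ *
          ∑ π ∈ Pis k, Real.exp (∑ j, (t₀ j + s * c j) * a i (π j))) := by
    funext s
    simp only [lamArg, kappa, Pi.add_apply, Pi.smul_apply, smul_eq_mul]
  rw [hfun]
  -- linear part
  have hlin : HasDerivAt (fun s : ℝ => ∑ j, (t₀ j + s * c j) * x j)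
      (∑ j, c j * x j) 0 := by
    have heq : (fun s : ℝ => ∑ j, (t₀ j + s * c j) * x j)
        = fun s : ℝ => (∑ j, t₀ j * x j) + s * (∑ j, c j * x j) := by
      funext s
      rw [Finset.mul_sum, ← Finset.sum_add_distrib]
      exact Finset.sum_congr rfl fun j _ => by ring
    rw [heq]
    exact (hasDerivAt_mul_const _).const_add _
  -- per (i, π) inner linear function
  have hip : ∀ (i : Fin b) (π : Fin (k - 1) → Fin k),
      HasDerivAt (fun s : ℝ => ∑ j, (t₀ j + s * c j) * a i (π j))
        (∑ j, c j * a i (π j)) 0 := by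
    intro i π
    have heq : (fun s : ℝ => ∑ j, (t₀ j + s * c j) * a i (π j))
        = fun s : ℝ => (∑ j, t₀ j * a i (π j)) + s * (∑ j, c j * a i (π j)) := by
      funext s
      rw [Finset.mul_sum, ← Finset.sum_add_distrib]
      exact Finset.sum_congr rfl fun j _ => by ring
    rw [heq]
    exact (hasDerivAt_mul_const _).const_add _
  have hzero : ∀ (i : Fin b) (π : Fin (k - 1) → Fin k),
      (∑ j, (t₀ j + (0:ℝ) * c j) * a i (π j)) = ∑ j, t₀ j * a i (π j) := by
    intro i π
    exact Finset.sum_congr rfl fun j _ => by ring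
  -- log part, per i
  have hlog : ∀ i : Fin b,
      HasDerivAt (fun s : ℝ => Real.log ((k.factorial : ℝ)⁻¹ *
          ∑ π ∈ Pis k, Real.exp (∑ j, (t₀ j + s * c j) * a i (π j))))
        ((∑ π ∈ Pis k, Real.exp (∑ j, t₀ j * a i (π j)) * (∑ j, c j * a i (π j))) /
          (∑ π ∈ Pis k, Real.exp (∑ j, t₀ j * a i (π j)))) 0 := by
    intro i
    have hexp : ∀ π ∈ Pis k, HasDerivAt
        (fun s : ℝ => Real.exp (∑ j, (t₀ j + s * c j) * a i (π j)))
        (Real.exp (∑ j, t₀ j * a i (π j)) * (∑ j, c j * a i (π j))) 0 := by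
      intro π _
      have h := (hip i π).exp
      rwa [hzero i π] at h
    have hsum := HasDerivAt.fun_sum hexp
    have hmul := hsum.const_mul ((k.factorial : ℝ)⁻¹)
    have hT : (0 : ℝ) < ∑ π ∈ Pis k, Real.exp (∑ j, (t₀ j + (0:ℝ) * c j) * a i (π j)) :=
      sum_exp_pos k _
    have hne : ((k.factorial : ℝ)⁻¹ *
        ∑ π ∈ Pis k, Real.exp (∑ j, (t₀ j + (0:ℝ) * c j) * a i (π j))) ≠ 0 := by
      positivity
    have hlog' := hmul.log hne
    have hTz : (∑ π ∈ Pis k, Real.exp (∑ j, (t₀ j + (0:ℝ) * c j) * a i (π j)))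
        = ∑ π ∈ Pis k, Real.exp (∑ j, t₀ j * a i (π j)) :=
      Finset.sum_congr rfl fun π _ => by rw [hzero i π]
    rw [hTz] at hlog'
    have hcancel : ((k.factorial : ℝ)⁻¹ *
          ∑ π ∈ Pis k, Real.exp (∑ j, t₀ j * a i (π j)) * (∑ j, c j * a i (π j))) /
        ((k.factorial : ℝ)⁻¹ * ∑ π ∈ Pis k, Real.exp (∑ j, t₀ j * a i (π j)))
        = (∑ π ∈ Pis k, Real.exp (∑ j, t₀ j * a i (π j)) * (∑ j, c j * a i (π j))) /
          (∑ π ∈ Pis k, Real.exp (∑ j, t₀ j * a i (π j))) :=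
      mul_div_mul_left _ _ (by positivity)
    rwa [hcancel] at hlog'
  have hksum := HasDerivAt.fun_sum (fun i (_ : i ∈ Finset.univ) => hlog i)
  have hkmul := hksum.const_mul ((b : ℝ)⁻¹)
  exact hlin.sub hkmul

end Part5

section Part6

variable {b k : ℕ} (a : Fin b → Fin k → ℝ)

lemma key_strict (hb : 1 ≤ b) (hk : 2 ≤ k) (ha : ∀ i, StrictMono (a i))
    (x t₀ : Fin (k - 1) → ℝ)
    (hmax : ∀ s, lamArg b k a x s ≤ lamArg b k a x t₀)
    (c : Fin (k - 1) → ℝ) (hc : c ≠ 0) :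
    ∃ πs ∈ Pis k, (∑ j, c j * x j) < ∑ j, c j * AbarPi b k a πs j := by
  classical
  obtain ⟨πs, hπs, hmaxπ⟩ := exists_max_pi a ha c
  refine ⟨πs, hπs, ?_⟩
  have hd := lamArg_line_hasDerivAt a x c t₀
  have hloc : IsLocalMax (fun s : ℝ => lamArg b k a x (t₀ + s • c)) 0 := by
    refine Filter.Eventually.of_forall fun s => ?_
    have h0 : t₀ + (0 : ℝ) • c = t₀ := by simp
    show lamArg b k a x (t₀ + s • c) ≤ lamArg b k a x (t₀ + (0:ℝ) • c)
    rw [h0]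
    exact hmax _
  have hD0 : ((∑ j, c j * x j) - (b : ℝ)⁻¹ * ∑ i,
      (∑ π ∈ Pis k, Real.exp (∑ j, t₀ j * a i (π j)) * (∑ j, c j * a i (π j))) /
      (∑ π ∈ Pis k, Real.exp (∑ j, t₀ j * a i (π j)))) = 0 := by
    have h1 := hloc.deriv_eq_zero
    rwa [hd.deriv] at h1
  -- pick coordinate where c is nonzero
  obtain ⟨j0, hj0⟩ := Function.ne_iff.1 hc
  -- pick m outside the range of πs
  have hπsinj := mem_Pis.1 hπs
  have hcard : (Finset.univ.image πs).card = k - 1 := by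
    rw [Finset.card_image_of_injective _ hπsinj, Finset.card_univ, Fintype.card_fin]
  have hcompl : ((Finset.univ.image πs)ᶜ : Finset (Fin k)).Nonempty := by
    rw [← Finset.card_pos, Finset.card_compl, hcard, Fintype.card_fin]
    omega
  obtain ⟨m, hm⟩ := hcompl
  have hmne : ∀ j, πs j ≠ m := by
    intro j hj
    rw [Finset.mem_compl] at hm
    exact hm (Finset.mem_image.2 ⟨j, Finset.mem_univ _, hj⟩)
  set π' : Fin (k - 1) → Fin k := Function.update πs j0 m with hπ'
  have hπ'inj : Function.Injective π' := by
    intro u v huv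
    by_cases hu : u = j0 <;> by_cases hv : v = j0
    · rw [hu, hv]
    · exfalso
      rw [hπ', hu, Function.update_self, Function.update_of_ne hv] at huv
      exact hmne v huv.symm
    · exfalso
      rw [hπ', hv, Function.update_self, Function.update_of_ne hu] at huv
      exact hmne u huv
    · rw [hπ', Function.update_of_ne hu, Function.update_of_ne hv] at huv
      exact hπsinj huv
  have hπ'mem : π' ∈ Pis k := mem_Pis.2 hπ'inj
  -- per-row strict bound
  have hrow : ∀ i : Fin b,
      (∑ π ∈ Pis k, Real.exp (∑ j, t₀ j * a i (π j)) * (∑ j, c j * a i (π j))) /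
      (∑ π ∈ Pis k, Real.exp (∑ j, t₀ j * a i (π j))) < ∑ j, c j * a i (πs j) := by
    intro i
    set M : ℝ := ∑ j, c j * a i (πs j) with hM
    have hT : (0 : ℝ) < ∑ π ∈ Pis k, Real.exp (∑ j, t₀ j * a i (π j)) :=
      sum_exp_pos k _
    rw [div_lt_iff₀ hT]
    have hstrictπ' : Real.exp (∑ j, t₀ j * a i (π' j)) * (∑ j, c j * a i (π' j))
        < Real.exp (∑ j, t₀ j * a i (π' j)) * M := by
      have hle : (∑ j, c j * a i (π' j)) ≤ M := hmaxπ i π' hπ'mem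
      have hdiff : (∑ j, c j * a i (π' j)) - M = c j0 * (a i m - a i (πs j0)) := by
        rw [hM, ← Finset.sum_sub_distrib]
        rw [Finset.sum_eq_single j0]
        · rw [hπ', Function.update_self]; ring
        · intro j _ hj
          rw [hπ', Function.update_of_ne hj]; ring
        · intro h; exact absurd (Finset.mem_univ j0) h
      have hane : a i m - a i (πs j0) ≠ 0 := by
        have : m ≠ πs j0 := fun h => hmne j0 h.symm
        have := (ha i).injective.ne this
        intro hcon
        apply this
        linarith
      have hne2 : (∑ j, c j * a i (π' j)) ≠ M := by
        intro hcon
        rw [hcon] at hdiff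
        simp only [sub_self] at hdiff
        exact mul_ne_zero hj0 hane hdiff.symm
      exact mul_lt_mul_of_pos_left (lt_of_le_of_ne hle hne2) (Real.exp_pos _)
    calc (∑ π ∈ Pis k, Real.exp (∑ j, t₀ j * a i (π j)) * (∑ j, c j * a i (π j)))
        < ∑ π ∈ Pis k, Real.exp (∑ j, t₀ j * a i (π j)) * M := by
          refine Finset.sum_lt_sum (fun π hπ => ?_) ⟨π', hπ'mem, hstrictπ'⟩
          exact mul_le_mul_of_nonneg_left (hmaxπ i π hπ) (Real.exp_pos _).le
      _ = M * ∑ π ∈ Pis k, Real.exp (∑ j, t₀ j * a i (π j)) := by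
          rw [← Finset.sum_mul]; ring
  -- combine
  haveI : Nonempty (Fin b) := ⟨⟨0, hb⟩⟩
  have hb' : (0 : ℝ) < (b : ℝ)⁻¹ := by
    have : (0 : ℝ) < (b : ℝ) := by exact_mod_cast hb
    positivity
  have hsum : (∑ i : Fin b,
      (∑ π ∈ Pis k, Real.exp (∑ j, t₀ j * a i (π j)) * (∑ j, c j * a i (π j))) /
      (∑ π ∈ Pis k, Real.exp (∑ j, t₀ j * a i (π j))))
      < ∑ i : Fin b, ∑ j, c j * a i (πs j) :=
    Finset.sum_lt_sum_of_nonempty Finset.univ_nonempty fun i _ => hrow i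
  have hfinal := mul_lt_mul_of_pos_left hsum hb'
  rw [← dot_AbarPi a hb c πs] at hfinal
  linarith

lemma Omega_subset_interior (hb : 1 ≤ b) (hk : 2 ≤ k)
    (ha : ∀ i, StrictMono (a i)) : Omega b k a ⊆ interior (PolyP b k a) := by
  intro x hx
  obtain ⟨t₀, hmax⟩ := hx
  by_contra hxnot
  have hconv : Convex ℝ (PolyP b k a) := convex_convexHull ℝ _
  obtain ⟨f, hf⟩ := geometric_hahn_banach_open_point hconv.interior isOpen_interior hxnot
  obtain ⟨y0, hy0⟩ := interiorP_nonempty a hb hk ha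
  classical
  set c : Fin (k - 1) → ℝ := fun j => f (fun j' => if j = j' then 1 else 0) with hcdef
  have hfz : ∀ z : Fin (k - 1) → ℝ, f z = ∑ j, z j * c j := by
    intro z
    conv_lhs => rw [pi_eq_sum_univ z]
    rw [map_sum]
    exact Finset.sum_congr rfl fun j _ => by rw [map_smul, smul_eq_mul, hcdef]
  have hcne : c ≠ 0 := by
    intro h0
    have h1 : f y0 < f x := hf y0 hy0
    rw [hfz y0, hfz x, h0] at h1
    simp at h1
  have hvert : ∀ v ∈ PolyP b k a, f v ≤ f x := by
    intro v hv
    by_contra hlt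
    push_neg at hlt
    have hseg : ∀ τ : ℝ, τ ∈ Set.Ioc (0 : ℝ) 1 → f (v + τ • (y0 - v)) < f x :=
      fun τ hτ => hf _ (hconv.add_smul_sub_mem_interior hv hy0 hτ)
    have hval : ∀ τ : ℝ, f (v + τ • (y0 - v)) = f v + τ * (f y0 - f v) := by
      intro τ
      rw [map_add, map_smul, map_sub, smul_eq_mul]
    have h1 := hseg 1 ⟨one_pos, le_refl 1⟩
    rw [hval] at h1
    have hy0x : f y0 < f x := by linarith
    set q : ℝ := f v - f y0 with hq
    have hq0 : 0 < q := by rw [hq]; linarith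
    set τ : ℝ := (f v - f x) / (2 * q) with hτdef
    have hvx : 0 < f v - f x := by linarith
    have hτpos : 0 < τ := by rw [hτdef]; positivity
    have hτ1 : τ ≤ 1 := by
      rw [hτdef, div_le_one (by positivity)]
      linarith
    have h2 := hseg τ ⟨hτpos, hτ1⟩
    rw [hval] at h2
    have hτq : τ * q = (f v - f x) / 2 := by
      rw [hτdef]
      field_simp
    have : τ * (f y0 - f v) = -(τ * q) := by rw [hq]; ring
    rw [this, hτq] at h2
    linarith
  obtain ⟨πs, hπs, hstrict⟩ := key_strict a hb hk ha x t₀ hmax c hcne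
  have hvmem : AbarPi b k a πs ∈ PolyP b k a :=
    subset_convexHull ℝ _ ⟨πs, hπs, rfl⟩
  have hvx := hvert (AbarPi b k a πs) hvmem
  rw [hfz, hfz] at hvx
  have e1 : (∑ j, AbarPi b k a πs j * c j) = ∑ j, c j * AbarPi b k a πs j :=
    Finset.sum_congr rfl fun j _ => mul_comm _ _
  have e2 : (∑ j, x j * c j) = ∑ j, c j * x j :=
    Finset.sum_congr rfl fun j _ => mul_comm _ _
  rw [e1, e2] at hvx
  linarith

end Part6

/-- Ω equals the topological interior of the (k−1)-polytope 𝒫. -/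
theorem stmt_0 (b k : ℕ) (hb : 1 ≤ b) (hk : 2 ≤ k) (a : Fin b → Fin k → ℝ)
    (ha : ∀ i : Fin b, StrictMono (a i)) :
    Omega b k a = interior (PolyP b k a) :=
  Set.Subset.antisymm (Omega_subset_interior a hb hk ha)
    (interior_subset_Omega a hb hk ha)
end

section
/- For every t ∈ ℝ^{k−1}, every l ∈ {1,…,k−1}, and every choice of l distinct indices j_1,…,j_l ∈ {1,…,k−1}, the gradient of κ satisfies the strict inequalities Σ_{j=1}^{l} Ā_j < Σ_{m=1}^{l} ∂κ/∂t_{j_m}(t) < Σ_{j=k−l+1}^{k} Ā_j, where ∂κ/∂t_j(t) = (1/b) Σ_{i=1}^b [ Σ_{π∈Π} a_{iπ(j)} exp(tᵀ a_{iπ}) / Σ_{π∈Π} exp(tᵀ a_{iπ}) ]. In particular the image of the gradient map κ′ is contained in the polytope 𝒫. -/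
open Finset

/-- The gradient κ′ of κ, given by its explicit formula:
∂κ/∂t_j(t) = (1/b) Σ_i [ Σ_{π∈Π} a_{iπ(j)} exp(tᵀ a_{iπ}) / Σ_{π∈Π} exp(tᵀ a_{iπ}) ]. -/
noncomputable def kappaGradExplicit (b k : ℕ) (a : Fin b → Fin k → ℝ)
    (t : Fin (k - 1) → ℝ) (j : Fin (k - 1)) : ℝ :=
  (b : ℝ)⁻¹ * ∑ i : Fin b,
    (∑ π ∈ Pis k, a i (π j) * Real.exp (∑ m : Fin (k - 1), t m * a i (π m))) /
    (∑ π ∈ Pis k, Real.exp (∑ m : Fin (k - 1), t m * a i (π m)))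


section Aux
open Pointwise

/-- A strictly monotone map between `Fin` types satisfies `m ≤ g m` on values. -/
lemma strictMono_val_le {l k : ℕ} (g : Fin l → Fin k) (hg : StrictMono g) :
    ∀ m : Fin l, (m : ℕ) ≤ (g m : ℕ) := by
  have H : ∀ n : ℕ, ∀ m : Fin l, (m : ℕ) = n → n ≤ (g m : ℕ) := by
    intro n
    induction n with
    | zero => intro m _; exact Nat.zero_le _
    | succ n ih =>
      intro m hm
      have hn : n < l := by omega
      have hlt : (⟨n, hn⟩ : Fin l) < m := by
        simp [Fin.lt_def, hm]
      have h1 : n ≤ (g ⟨n, hn⟩ : ℕ) := ih _ rfl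
      have h2 : g ⟨n, hn⟩ < g m := hg hlt
      have := Fin.lt_def.mp h2
      omega
  intro m; exact H _ m rfl

/-- A strictly monotone permutation of `Fin k` is the identity. -/
lemma strictMono_perm_eq_one {k : ℕ} (σ : Equiv.Perm (Fin k))
    (hσ : StrictMono σ) : σ = 1 := by
  have hinv : StrictMono (⇑σ⁻¹) := by
    intro p q hpq
    by_contra hle
    push_neg at hle
    have h2 : q ≤ p := by
      have := hσ.monotone hle
      simpa using this
    exact absurd h2 (not_le.mpr hpq)
  have h1 := strictMono_val_le _ hσ
  have h2 := strictMono_val_le _ hinv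
  apply Equiv.ext
  intro x
  have ha := h1 x
  have hb := h2 (σ x)
  rw [show σ⁻¹ (σ x) = x from σ.symm_apply_apply x] at hb
  simp only [Equiv.Perm.one_apply]
  exact Fin.ext (by omega)

/-- Sum of `f` over any `l`-element subset is at least the sum over the bottom `l` indices,
strictly if the subset is not the bottom set. -/
lemma botSum {k l : ℕ} (hlk : l ≤ k) (f : Fin k → ℝ) (hf : StrictMono f)
    (S : Finset (Fin k)) (hS : S.card = l) :
    (∑ j ∈ univ.filter (fun j : Fin k => (j : ℕ) < l), f j) ≤ ∑ j ∈ S, f j ∧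
    (S ≠ univ.filter (fun j : Fin k => (j : ℕ) < l) →
      (∑ j ∈ univ.filter (fun j : Fin k => (j : ℕ) < l), f j) < ∑ j ∈ S, f j) := by
  set emb : Fin l → Fin k := Fin.castLE hlk with hemb
  have hembinj : Function.Injective emb := Fin.castLE_injective hlk
  have hbot : univ.filter (fun j : Fin k => (j : ℕ) < l) = Finset.image emb univ := by
    ext j
    simp only [mem_filter, mem_univ, true_and, mem_image]
    constructor
    · intro h; exact ⟨⟨j, h⟩, rfl⟩
    · rintro ⟨m, rfl⟩; exact m.isLt
  set g : Fin l → Fin k := fun m => S.orderEmbOfFin hS m with hgdef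
  have hginj : Function.Injective g := (S.orderEmbOfFin hS).injective
  have hgmono : StrictMono g := (S.orderEmbOfFin hS).strictMono
  have hSim : S = Finset.image g univ := by
    ext x
    simp only [mem_image, mem_univ, true_and]
    constructor
    · intro hx
      have : x ∈ Set.range (S.orderEmbOfFin hS) := by
        rw [Finset.range_orderEmbOfFin]; exact hx
      obtain ⟨m, hm⟩ := this; exact ⟨m, hm⟩
    · rintro ⟨m, rfl⟩; exact Finset.orderEmbOfFin_mem S hS m
  have hle : ∀ m : Fin l, emb m ≤ g m := by
    intro m
    have := strictMono_val_le g hgmono m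
    exact Fin.le_def.mpr (by simpa [hemb] using this)
  have hsum1 : (∑ j ∈ univ.filter (fun j : Fin k => (j : ℕ) < l), f j)
      = ∑ m : Fin l, f (emb m) := by
    rw [hbot, Finset.sum_image (fun x _ y _ h => hembinj h)]
  have hsum2 : (∑ j ∈ S, f j) = ∑ m : Fin l, f (g m) := by
    rw [hSim, Finset.sum_image (fun x _ y _ h => hginj h)]
  constructor
  · rw [hsum1, hsum2]
    exact Finset.sum_le_sum fun m _ => hf.monotone (hle m)
  · intro hne
    rw [hsum1, hsum2]
    have hex : ∃ m : Fin l, emb m < g m := by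
      by_contra hc
      push_neg at hc
      have heq : ∀ m, g m = emb m := fun m => le_antisymm (hc m) (hle m)
      apply hne
      rw [hSim, hbot]
      exact Finset.image_congr fun m _ => heq m
    obtain ⟨m, hm⟩ := hex
    exact Finset.sum_lt_sum (fun m _ => hf.monotone (hle m)) ⟨m, mem_univ _, hf hm⟩

/-- Top version. -/
lemma topSum {k l : ℕ} (hlk : l ≤ k) (f : Fin k → ℝ) (hf : StrictMono f)
    (S : Finset (Fin k)) (hS : S.card = l) :
    (∑ j ∈ S, f j) ≤ (∑ j ∈ univ.filter (fun j : Fin k => k - l ≤ (j : ℕ)), f j) ∧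
    (S ≠ univ.filter (fun j : Fin k => k - l ≤ (j : ℕ)) →
      (∑ j ∈ S, f j) < ∑ j ∈ univ.filter (fun j : Fin k => k - l ≤ (j : ℕ)), f j) := by
  set f' : Fin k → ℝ := fun j => -f j.rev with hf'def
  have hf' : StrictMono f' := by
    intro x y hxy
    simp only [hf'def, neg_lt_neg_iff]
    exact hf (Fin.rev_lt_rev.mpr hxy)
  set S' : Finset (Fin k) := S.image Fin.rev with hS'def
  have hS' : S'.card = l := by
    rw [hS'def, Finset.card_image_of_injective _ Fin.rev_injective, hS]
  have hrevrev : ∀ T : Finset (Fin k), (T.image Fin.rev).image Fin.rev = T := by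
    intro T
    rw [Finset.image_image]
    have : (Fin.rev ∘ Fin.rev : Fin k → Fin k) = id := by
      funext x; simp
    rw [this, Finset.image_id]
  have hbottop : (univ.filter (fun j : Fin k => (j : ℕ) < l))
      = (univ.filter (fun j : Fin k => k - l ≤ (j : ℕ))).image Fin.rev := by
    ext j
    simp only [mem_filter, mem_univ, true_and, mem_image]
    constructor
    · intro h
      refine ⟨j.rev, ?_, by simp⟩
      have := j.isLt
      simp only [Fin.val_rev]
      omega
    · rintro ⟨x, hx, rfl⟩
      have := x.isLt
      simp only [Fin.val_rev]
      omega
  have hsumS : ∑ j ∈ S', f' j = -∑ j ∈ S, f j := by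
    rw [hS'def, Finset.sum_image (fun x _ y _ h => Fin.rev_injective h)]
    simp [hf'def]
  have hsumtop : ∑ j ∈ univ.filter (fun j : Fin k => (j : ℕ) < l), f' j
      = -∑ j ∈ univ.filter (fun j : Fin k => k - l ≤ (j : ℕ)), f j := by
    rw [hbottop, Finset.sum_image (fun x _ y _ h => Fin.rev_injective h)]
    simp [hf'def]
  have hb := botSum hlk f' hf' S' hS'
  constructor
  · have := hb.1
    rw [hsumS, hsumtop] at this
    linarith
  · intro hne
    have hne' : S' ≠ univ.filter (fun j : Fin k => (j : ℕ) < l) := by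
      intro hcon
      apply hne
      rw [hbottop] at hcon
      have := congrArg (Finset.image Fin.rev) hcon
      rwa [hS'def, hrevrev, hrevrev] at this
    have := hb.2 hne'
    rw [hsumS, hsumtop] at this
    linarith

noncomputable def phi {k : ℕ} (σ : Equiv.Perm (Fin k)) : ℕ := ∑ p : Fin k, (σ p).val * p.val

lemma phi_le {k : ℕ} (hk : 0 < k) (σ : Equiv.Perm (Fin k)) : phi σ < k * k * k := by
  have h1 : phi σ ≤ (univ : Finset (Fin k)).card • ((k-1) * (k-1)) := by
    apply Finset.sum_le_card_nsmul
    intro p _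
    have h1 := (σ p).isLt
    have h2 := p.isLt
    exact Nat.mul_le_mul (by omega) (by omega)
  simp only [Finset.card_univ, Fintype.card_fin, smul_eq_mul] at h1
  have h2 : k * ((k-1) * (k-1)) < k * k * k := by
    obtain ⟨j, rfl⟩ : ∃ j, k = j + 1 := ⟨k-1, by omega⟩
    simp only [Nat.add_sub_cancel]
    nlinarith
  omega

lemma phi_swap_gt {k : ℕ} (σ : Equiv.Perm (Fin k)) {p q : Fin k} (hpq : p < q)
    (hinv : σ q < σ p) : phi σ < phi (σ * Equiv.swap p q) := by
  have hne : p ≠ q := ne_of_lt hpq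
  have hqmem : q ∈ (univ : Finset (Fin k)).erase p := by
    simp [Finset.mem_erase, hne.symm]
  have key : ∀ G : Fin k → ℕ, ∑ r : Fin k, G r = (G p + G q) + ∑ r ∈ ((univ : Finset (Fin k)).erase p).erase q, G r := by
    intro G
    rw [add_assoc, Finset.add_sum_erase _ G hqmem, Finset.add_sum_erase _ G (mem_univ p)]
  have hswap : phi (σ * Equiv.swap p q) = ∑ r : Fin k, (σ r).val * (Equiv.swap p q r).val := by
    unfold phi
    apply Fintype.sum_equiv (Equiv.swap p q)
    intro r
    simp [Equiv.Perm.mul_apply, Equiv.swap_apply_self]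
  rw [hswap, key (fun r => (σ r).val * (Equiv.swap p q r).val)]
  unfold phi
  rw [key (fun r => (σ r).val * r.val)]
  have hrest : ∑ r ∈ ((univ : Finset (Fin k)).erase p).erase q, (σ r).val * (Equiv.swap p q r).val
      = ∑ r ∈ ((univ : Finset (Fin k)).erase p).erase q, (σ r).val * r.val := by
    apply Finset.sum_congr rfl
    intro r hr
    simp only [Finset.mem_erase] at hr
    rw [Equiv.swap_apply_of_ne_of_ne hr.2.1 hr.1]
  rw [hrest]
  apply Nat.add_lt_add_right
  rw [Equiv.swap_apply_left, Equiv.swap_apply_right]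
  have h1 : (σ q).val < (σ p).val := hinv
  have h2 : p.val < q.val := hpq
  zify
  nlinarith

/-- Vertex set of the permutohedron of a function `w : Fin k → ℝ`. -/
def permSet {k : ℕ} (w : Fin k → ℝ) : Set (Fin k → ℝ) :=
  {x | ∃ π : Equiv.Perm (Fin k), x = fun r => w (π r)}

lemma permSet_comp_mem {k : ℕ} (w : Fin k → ℝ) (e : Equiv.Perm (Fin k))
    {x : Fin k → ℝ} (hx : x ∈ permSet w) : (fun r => x (e r)) ∈ permSet w := by
  obtain ⟨π, rfl⟩ := hx
  exact ⟨π * e, rfl⟩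

/-- Composition with a permutation preserves membership in the convex hull of `permSet`. -/
lemma permSet_hull_comp_mem {k : ℕ} (w : Fin k → ℝ) (e : Equiv.Perm (Fin k))
    {x : Fin k → ℝ} (hx : x ∈ convexHull ℝ (permSet w)) :
    (fun r => x (e r)) ∈ convexHull ℝ (permSet w) := by
  have hL : (fun r => x (e r)) = (LinearMap.funLeft ℝ ℝ e) x := rfl
  rw [hL]
  have h1 : (LinearMap.funLeft ℝ ℝ (⇑e)) x ∈
      (LinearMap.funLeft ℝ ℝ (⇑e)) '' (convexHull ℝ (permSet w)) :=
    Set.mem_image_of_mem _ hx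
  rw [LinearMap.image_convexHull] at h1
  refine convexHull_mono ?_ h1
  rintro y ⟨z, hz, rfl⟩
  exact permSet_comp_mem w e hz

/-- Key lemma: `u + v ∘ ρ` lies in the convex hull of the permutations of `u + v`. -/
lemma permMem {k : ℕ} (hk : 0 < k) (u v : Fin k → ℝ) (hu : Monotone u) (hv : Monotone v)
    (ρ : Equiv.Perm (Fin k)) :
    (fun r => u r + v (ρ r)) ∈ convexHull ℝ (permSet (fun r => u r + v r)) := by
  suffices H : ∀ n : ℕ, ∀ ρ : Equiv.Perm (Fin k), k * k * k - phi ρ ≤ n →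
      (fun r => u r + v (ρ r)) ∈ convexHull ℝ (permSet (fun r => u r + v r)) by
    exact H _ ρ le_rfl
  intro n
  induction n with
  | zero =>
    intro ρ hρ
    exfalso
    have := phi_le hk ρ
    omega
  | succ n ih =>
    intro ρ hρ
    by_cases hid : ∃ p q : Fin k, p < q ∧ ρ q < ρ p
    · obtain ⟨p, q, hpq, hinv⟩ := hid
      set ρ' := ρ * Equiv.swap p q with hρ'def
      have hphi : phi ρ < phi ρ' := phi_swap_gt ρ hpq hinv
      have hb1 : k * k * k - phi ρ' ≤ n := by
        have := phi_le hk ρ'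
        omega
      have hx' := ih ρ' hb1
      have hx'' : (fun r => u (Equiv.swap p q r) + v (ρ' (Equiv.swap p q r)))
          ∈ convexHull ℝ (permSet (fun r => u r + v r)) :=
        permSet_hull_comp_mem _ (Equiv.swap p q) hx'
      -- now the convex combination
      set A := v (ρ p) with hA
      set B := v (ρ q) with hB
      have hd1 : u p ≤ u q := hu hpq.le
      have hd2 : B ≤ A := hv hinv.le
      set d1 := u q - u p with hd1def
      set d2 := A - B with hd2def
      have hd1' : 0 ≤ d1 := by simp [hd1def]; linarith
      have hd2' : 0 ≤ d2 := by simp [hd2def]; linarith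
      -- values of ρ' at p, q, r
      have hρ'p : ρ' p = ρ q := by simp [hρ'def, Equiv.Perm.mul_apply, Equiv.swap_apply_left]
      have hρ'q : ρ' q = ρ p := by simp [hρ'def, Equiv.Perm.mul_apply, Equiv.swap_apply_right]
      have hρ'r : ∀ r, r ≠ p → r ≠ q → ρ' r = ρ r := by
        intro r h1 h2
        simp [hρ'def, Equiv.Perm.mul_apply, Equiv.swap_apply_of_ne_of_ne h1 h2]
      by_cases hdeg : d1 + d2 = 0
      · -- degenerate case: x = x'
        have h1 : u p = u q := by
          simp only [hd1def, hd2def] at hdeg; linarith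
        have h2 : A = B := by
          simp only [hd1def, hd2def] at hdeg; linarith
        have : (fun r => u r + v (ρ r)) = (fun r => u r + v (ρ' r)) := by
          funext r
          by_cases hr1 : r = p
          · subst hr1; rw [hρ'p, ← hA, ← hB, h2]
          · by_cases hr2 : r = q
            · subst hr2; rw [hρ'q, ← hA, ← hB, h2]
            · rw [hρ'r r hr1 hr2]
        rw [this]; exact hx'
      · have hpos : 0 < d1 + d2 := by
          rcases lt_or_eq_of_le (by linarith : (0:ℝ) ≤ d1 + d2) with h | h
          · exact h
          · exact absurd h.symm hdeg
        set θ := d1 / (d1 + d2) with hθ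
        have hθ0 : 0 ≤ θ := div_nonneg hd1' hpos.le
        have hθ1 : 0 ≤ 1 - θ := by
          have : θ ≤ 1 := by
            rw [hθ, div_le_one hpos]; linarith
          linarith
        have hcomb : (fun r => u r + v (ρ r)) =
            θ • (fun r => u r + v (ρ' r)) +
            (1 - θ) • (fun r => u (Equiv.swap p q r) + v (ρ' (Equiv.swap p q r))) := by
          funext r
          simp only [Pi.add_apply, Pi.smul_apply, smul_eq_mul]
          by_cases hr1 : r = p
          · rw [hr1]
            rw [Equiv.swap_apply_left, hρ'p, hρ'q, ← hA, ← hB]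
            have : u p + A = θ * (u p + B) + (1 - θ) * (u q + A) := by
              rw [hθ]
              field_simp
              simp only [hd1def, hd2def]
              ring
            exact this
          · by_cases hr2 : r = q
            · rw [hr2]
              rw [Equiv.swap_apply_right, hρ'q, hρ'p, ← hA, ← hB]
              have : u q + B = θ * (u q + A) + (1 - θ) * (u p + B) := by
                rw [hθ]
                field_simp
                simp only [hd1def, hd2def]
                ring
              exact this
            · rw [Equiv.swap_apply_of_ne_of_ne hr1 hr2, hρ'r r hr1 hr2]
              ring
        rw [hcomb]
        exact (convex_convexHull ℝ _) hx' hx'' hθ0 hθ1 (by ring)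
    · push_neg at hid
      have hmono : StrictMono ⇑ρ := by
        intro p q hpq
        have h1 := hid p q hpq
        have h2 : ρ p ≠ ρ q := fun h => (ne_of_lt hpq) (ρ.injective h)
        rcases lt_or_eq_of_le h1 with h | h
        · exact h
        · exact absurd h h2
      have : ρ = 1 := strictMono_perm_eq_one ρ hmono
      subst this
      apply subset_convexHull
      exact ⟨1, rfl⟩

/-- Two-permutation version. -/
lemma permMem2 {k : ℕ} (hk : 0 < k) (u v : Fin k → ℝ) (hu : Monotone u) (hv : Monotone v)
    (σ τ : Equiv.Perm (Fin k)) :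
    (fun r => u (σ r) + v (τ r)) ∈ convexHull ℝ (permSet (fun r => u r + v r)) := by
  have h := permMem hk u v hu hv (τ * σ⁻¹)
  have h2 := permSet_hull_comp_mem (fun r => u r + v r) σ h
  have : (fun r => u (σ r) + v (τ r)) =
      (fun r => (fun r' => u r' + v ((τ * σ⁻¹) r')) (σ r)) := by
    funext r
    simp [Equiv.Perm.mul_apply]
  rw [this]
  exact h2

/-- Adding two convex hull members lands in the hull when all vertex sums do. -/
lemma addMem {E : Type*} [AddCommGroup E] [Module ℝ E] {P Q C : Set E} {x y : E}
    (hx : x ∈ convexHull ℝ P) (hy : y ∈ convexHull ℝ Q)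
    (hPQ : ∀ p ∈ P, ∀ q ∈ Q, p + q ∈ convexHull ℝ C) :
    x + y ∈ convexHull ℝ C := by
  have key : ∀ q ∈ Q, x + q ∈ convexHull ℝ C := by
    intro q hq
    have h2 : x + q ∈ q +ᵥ convexHull ℝ P := ⟨x, hx, by simp [vadd_eq_add, add_comm]⟩
    rw [← convexHull_vadd] at h2
    refine convexHull_min ?_ (convex_convexHull ℝ C) h2
    rintro z ⟨p, hp, rfl⟩
    simpa [vadd_eq_add, add_comm] using hPQ p hp q hq
  have h1 : x + y ∈ x +ᵥ convexHull ℝ Q := ⟨y, hy, rfl⟩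
  rw [← convexHull_vadd] at h1
  refine convexHull_min ?_ (convex_convexHull ℝ C) h1
  rintro z ⟨q, hq, rfl⟩
  simpa [vadd_eq_add] using key q hq

/-- Sum over a finset of hull members of individual permutohedra lies in the hull of
the permutohedron of the sum. -/
lemma sumMem {k b : ℕ} (hk : 0 < k) (a : Fin b → Fin k → ℝ) (ha : ∀ i, Monotone (a i))
    (S : Finset (Fin b)) (G : Fin b → Fin k → ℝ)
    (hG : ∀ i ∈ S, G i ∈ convexHull ℝ (permSet (a i))) :
    (∑ i ∈ S, G i) ∈ convexHull ℝ (permSet (fun r => ∑ i ∈ S, a i r)) := by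
  induction S using Finset.induction_on with
  | empty =>
    simp only [Finset.sum_empty]
    apply subset_convexHull
    exact ⟨1, by funext r; simp⟩
  | @insert j S hj ih =>
    rw [Finset.sum_insert hj]
    have hGj := hG j (mem_insert_self _ _)
    have hS := ih (fun i hi => hG i (mem_insert_of_mem hi))
    have htarget : (permSet (fun r => ∑ i ∈ insert j S, a i r))
        = permSet (fun r => a j r + ∑ i ∈ S, a i r) := by
      have : (fun r => ∑ i ∈ insert j S, a i r) = (fun r => a j r + ∑ i ∈ S, a i r) := by
        funext r; rw [Finset.sum_insert hj]
      rw [this]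
    rw [htarget]
    apply addMem hGj hS
    rintro p ⟨σ, rfl⟩ q ⟨τ, rfl⟩
    have hT : Monotone (fun r => ∑ i ∈ S, a i r) := by
      intro x y hxy
      exact Finset.sum_le_sum fun i _ => ha i hxy
    have := permMem2 hk (a j) (fun r => ∑ i ∈ S, a i r) (ha j) hT σ τ
    convert this using 1
    rfl

/-- Extend an injection `Fin (k-1) → Fin k` to a permutation of `Fin k`. -/
noncomputable def extendPerm {k : ℕ} (hk : 1 ≤ k) (π : Fin (k - 1) → Fin k)
    (hπ : Function.Injective π) : Equiv.Perm (Fin k) := by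
  classical
  have hM : ((univ : Finset (Fin k)) \ Finset.image π univ).Nonempty := by
    rw [← Finset.card_pos, Finset.card_sdiff_of_subset (Finset.subset_univ _),
      Finset.card_image_of_injective _ hπ]
    simp only [Finset.card_univ, Fintype.card_fin]
    omega
  set m := ((univ : Finset (Fin k)) \ Finset.image π univ).min' hM with hm
  set F : Fin k → Fin k := fun x => if h : (x : ℕ) < k - 1 then π ⟨x, h⟩ else m with hF
  have hmni : m ∉ Finset.image π univ := by
    have := Finset.min'_mem _ hM
    rw [Finset.mem_sdiff] at this
    exact this.2
  have hFinj : Function.Injective F := by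
    intro x y hxy
    simp only [hF] at hxy
    split_ifs at hxy with h1 h2 h2
    · have := hπ hxy
      have := congrArg Fin.val this
      exact Fin.ext (by simpa using this)
    · exact absurd (Finset.mem_image_of_mem π (mem_univ _)) (hxy ▸ hmni)
    · exact absurd (Finset.mem_image_of_mem π (mem_univ _)) (hxy ▸ hmni).elim
    · have hx := x.isLt
      have hy := y.isLt
      exact Fin.ext (by omega)
  exact Equiv.ofBijective F (Finite.injective_iff_bijective.mp hFinj)

lemma extendPerm_apply {k : ℕ} (hk : 1 ≤ k) (π : Fin (k - 1) → Fin k)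
    (hπ : Function.Injective π) (j : Fin (k - 1)) :
    extendPerm hk π hπ (Fin.castLE (Nat.sub_le k 1) j) = π j := by
  show (fun x : Fin k => if h : (x : ℕ) < k - 1 then π ⟨x, h⟩ else _) _ = π j
  simp only [Fin.coe_castLE]
  rw [dif_pos j.isLt]

/-- Two permutations agreeing on the first `k-1` values are equal. -/
lemma perm_ext_of_agree {k : ℕ} (hk : 1 ≤ k) (σ τ : Equiv.Perm (Fin k))
    (h : ∀ j : Fin (k - 1), σ (Fin.castLE (Nat.sub_le k 1) j) = τ (Fin.castLE (Nat.sub_le k 1) j)) :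
    σ = τ := by
  apply Equiv.ext
  intro x
  by_cases hx : (x : ℕ) < k - 1
  · exact h ⟨x, hx⟩
  · by_contra hne
    set y := σ.symm (τ x) with hy
    have hsy : σ y = τ x := by rw [hy]; simp
    have hyx : y ≠ x := by
      intro hc
      exact hne ((congrArg σ hc.symm).trans hsy)
    have hylt : (y : ℕ) < k - 1 := by
      have h1 := y.isLt
      have h2 := x.isLt
      have : (y : ℕ) ≠ (x : ℕ) := fun hc => hyx (Fin.ext hc)
      omega
    have := h ⟨y, hylt⟩
    have hcast : (Fin.castLE (Nat.sub_le k 1) (⟨y, hylt⟩ : Fin (k-1))) = y := rfl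
    rw [hcast] at this
    rw [hsy] at this
    have := τ.injective this.symm
    exact hyx (this ▸ rfl)

/-- Transfer sums over `Pis k` to sums over permutations. -/
lemma sum_Pis_eq {k : ℕ} (hk : 1 ≤ k) (F : (Fin (k - 1) → Fin k) → ℝ) :
    ∑ π ∈ Pis k, F π = ∑ σ : Equiv.Perm (Fin k), F (fun j => σ (Fin.castLE (Nat.sub_le k 1) j)) := by
  classical
  have key : ∀ π ∈ Pis k, Function.Injective π := by
    intro π hπ
    simpa [Pis, Finset.mem_filter] using hπ
  exact Finset.sum_bij'
    (fun π hπ => extendPerm hk π (key π hπ))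
    (fun σ _ => fun j => σ (Fin.castLE (Nat.sub_le k 1) j))
    (fun π hπ => mem_univ _)
    (by
      intro σ _
      simp only [Pis, Finset.mem_filter, Finset.mem_univ, true_and]
      exact σ.injective.comp (Fin.castLE_injective _))
    (by
      intro π hπ
      funext j
      exact extendPerm_apply hk π _ j)
    (by
      intro σ _
      apply perm_ext_of_agree hk
      intro j
      rw [extendPerm_apply])
    (by
      intro π hπ
      congr 1
      funext j
      rw [extendPerm_apply])

lemma part1 (b k : ℕ) (hb : 1 ≤ b) (hk : 2 ≤ k) (a : Fin b → Fin k → ℝ)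
    (ha : ∀ i : Fin b, StrictMono (a i))
    (t : Fin (k - 1) → ℝ) (l : ℕ) (hl1 : 1 ≤ l) (hl2 : l ≤ k - 1)
    (s : Fin l → Fin (k - 1)) (hs : Function.Injective s) :
    (∑ j ∈ Finset.univ.filter (fun j : Fin k => (j : ℕ) < l), Abar b k a j)
        < (∑ m : Fin l, kappaGradExplicit b k a t (s m)) ∧
    (∑ m : Fin l, kappaGradExplicit b k a t (s m))
        < ∑ j ∈ Finset.univ.filter (fun j : Fin k => k - l ≤ (j : ℕ)), Abar b k a j := by
  classical
  have hlk : l ≤ k := le_trans hl2 (Nat.sub_le k 1)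
  set ιk : Fin (k - 1) → Fin k := Fin.castLE (Nat.sub_le k 1) with hιk
  have hιinj : Function.Injective ιk := Fin.castLE_injective _
  set wP : Fin b → (Fin (k - 1) → Fin k) → ℝ :=
    fun i π => Real.exp (∑ m : Fin (k - 1), t m * a i (π m)) with hwP
  set D : Fin b → ℝ := fun i => ∑ π ∈ Pis k, wP i π with hD
  have hPisne : (Pis k).Nonempty := ⟨ιk, by
    simp only [Pis, Finset.mem_filter, Finset.mem_univ, true_and]; exact hιinj⟩
  have hDpos : ∀ i, 0 < D i := fun i =>
    Finset.sum_pos (fun π _ => Real.exp_pos _) hPisne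
  set c : Fin b → (Fin (k - 1) → Fin k) → ℝ :=
    fun i π => ∑ m : Fin l, a i (π (s m)) with hc
  have hbpos : (0:ℝ) < (b:ℝ)⁻¹ := by
    rw [inv_pos]; exact_mod_cast Nat.lt_of_lt_of_le Nat.zero_lt_one hb
  have hbne : ((univ : Finset (Fin b))).Nonempty := ⟨⟨0, hb⟩, mem_univ _⟩
  -- rewrite the middle term
  have hmid : (∑ m : Fin l, kappaGradExplicit b k a t (s m))
      = (b:ℝ)⁻¹ * ∑ i : Fin b, (∑ π ∈ Pis k, c i π * wP i π) / D i := by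
    unfold kappaGradExplicit
    rw [← Finset.mul_sum]
    congr 1
    rw [Finset.sum_comm]
    apply Finset.sum_congr rfl
    intro i _
    rw [← Finset.sum_div]
    congr 1
    rw [Finset.sum_comm]
    apply Finset.sum_congr rfl
    intro π _
    rw [← Finset.sum_mul]
  -- membership facts about images
  have himg : ∀ π ∈ Pis k, (Finset.image (fun m => π (s m)) univ).card = l := by
    intro π hπ
    have hπinj : Function.Injective π := by
      simpa [Pis, Finset.mem_filter] using hπ
    rw [Finset.card_image_of_injective _
      (show Function.Injective fun m => π (s m) from hπinj.comp hs)]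
    simp
  have hcval : ∀ i, ∀ π ∈ Pis k, c i π = ∑ j ∈ Finset.image (fun m => π (s m)) univ, a i j := by
    intro i π hπ
    have hπinj : Function.Injective π := by
      simpa [Pis, Finset.mem_filter] using hπ
    rw [Finset.sum_image (fun x _ y _ h => hs (hπinj h))]
  -- the special injections
  set m0 : Fin l := ⟨0, hl1⟩ with hm0
  have hspecial : ∀ x0 : Fin k, (fun j => Equiv.swap (ιk (s m0)) x0 (ιk j)) ∈ Pis k ∧
      (fun j => Equiv.swap (ιk (s m0)) x0 (ιk j)) (s m0) = x0 := by
    intro x0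
    constructor
    · simp only [Pis, Finset.mem_filter, Finset.mem_univ, true_and]
      exact (Equiv.swap (ιk (s m0)) x0).injective.comp hιinj
    · exact Equiv.swap_apply_left _ _
  constructor
  · -- lower bound
    rw [hmid]
    have hLHS : (∑ j ∈ Finset.univ.filter (fun j : Fin k => (j : ℕ) < l), Abar b k a j)
        = (b:ℝ)⁻¹ * ∑ i : Fin b, ∑ j ∈ Finset.univ.filter (fun j : Fin k => (j : ℕ) < l), a i j := by
      unfold Abar
      rw [← Finset.mul_sum]
      congr 1
      rw [Finset.sum_comm]
    rw [hLHS]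
    apply mul_lt_mul_of_pos_left _ hbpos
    apply Finset.sum_lt_sum_of_nonempty hbne
    intro i _
    rw [lt_div_iff₀ (hDpos i), hD, Finset.mul_sum]
    -- strict vertex
    set lastk : Fin k := ⟨k - 1, by omega⟩ with hlast
    obtain ⟨hπs, hπsval⟩ := hspecial lastk
    apply Finset.sum_lt_sum
    · intro π hπ
      apply mul_le_mul_of_nonneg_right _ (Real.exp_pos _).le
      rw [hcval i π hπ]
      exact (botSum hlk (a i) (ha i) _ (himg π hπ)).1
    · refine ⟨_, hπs, ?_⟩
      apply mul_lt_mul_of_pos_right _ (Real.exp_pos _)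
      rw [hcval i _ hπs]
      apply (botSum hlk (a i) (ha i) _ (himg _ hπs)).2
      intro hcon
      have hmem : lastk ∈ Finset.image
          (fun m => (fun j => Equiv.swap (ιk (s m0)) lastk (ιk j)) (s m)) univ :=
        Finset.mem_image.mpr ⟨m0, mem_univ _, Equiv.swap_apply_left _ _⟩
      rw [hcon] at hmem
      simp only [Finset.mem_filter, Finset.mem_univ, true_and, hlast] at hmem
      omega
  · -- upper bound
    rw [hmid]
    have hRHS : (∑ j ∈ Finset.univ.filter (fun j : Fin k => k - l ≤ (j : ℕ)), Abar b k a j)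
        = (b:ℝ)⁻¹ * ∑ i : Fin b, ∑ j ∈ Finset.univ.filter (fun j : Fin k => k - l ≤ (j : ℕ)), a i j := by
      unfold Abar
      rw [← Finset.mul_sum]
      congr 1
      rw [Finset.sum_comm]
    rw [hRHS]
    apply mul_lt_mul_of_pos_left _ hbpos
    apply Finset.sum_lt_sum_of_nonempty hbne
    intro i _
    rw [div_lt_iff₀ (hDpos i), hD, Finset.mul_sum]
    set zerok : Fin k := ⟨0, by omega⟩ with hzero
    obtain ⟨hπs, hπsval⟩ := hspecial zerok
    apply Finset.sum_lt_sum
    · intro π hπ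
      apply mul_le_mul_of_nonneg_right _ (Real.exp_pos _).le
      rw [hcval i π hπ]
      exact (topSum hlk (a i) (ha i) _ (himg π hπ)).1
    · refine ⟨_, hπs, ?_⟩
      apply mul_lt_mul_of_pos_right _ (Real.exp_pos _)
      rw [hcval i _ hπs]
      apply (topSum hlk (a i) (ha i) _ (himg _ hπs)).2
      intro hcon
      have hmem : zerok ∈ Finset.image
          (fun m => (fun j => Equiv.swap (ιk (s m0)) zerok (ιk j)) (s m)) univ :=
        Finset.mem_image.mpr ⟨m0, mem_univ _, Equiv.swap_apply_left _ _⟩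
      rw [hcon] at hmem
      simp only [Finset.mem_filter, Finset.mem_univ, true_and, hzero] at hmem
      omega

lemma part2 (b k : ℕ) (hb : 1 ≤ b) (hk : 2 ≤ k) (a : Fin b → Fin k → ℝ)
    (ha : ∀ i : Fin b, StrictMono (a i)) (t : Fin (k - 1) → ℝ) :
    kappaGradExplicit b k a t ∈ PolyP b k a := by
  classical
  have hk0 : 0 < k := by omega
  have hk1 : 1 ≤ k := by omega
  set ιk : Fin (k - 1) → Fin k := Fin.castLE (Nat.sub_le k 1) with hιk
  set wt : Fin b → Equiv.Perm (Fin k) → ℝ :=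
    fun i σ => Real.exp (∑ m : Fin (k - 1), t m * a i (σ (ιk m))) with hwt
  have hune : (univ : Finset (Equiv.Perm (Fin k))).Nonempty := ⟨1, mem_univ _⟩
  set G : Fin b → Fin k → ℝ :=
    fun i => Finset.centerMass univ (wt i) (fun σ => fun r => a i (σ r)) with hG
  have hGmem : ∀ i, G i ∈ convexHull ℝ (permSet (a i)) := by
    intro i
    apply Finset.centerMass_mem_convexHull
    · intro σ _; exact (Real.exp_pos _).le
    · exact Finset.sum_pos (fun σ _ => Real.exp_pos _) hune
    · intro σ _; exact ⟨σ, rfl⟩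
  have hGcoord : ∀ i j, G i (ιk j)
      = (∑ σ : Equiv.Perm (Fin k), wt i σ)⁻¹ *
        ∑ σ : Equiv.Perm (Fin k), wt i σ * a i (σ (ιk j)) := by
    intro i j
    rw [hG]
    simp [Finset.centerMass, Finset.sum_apply, Pi.smul_apply, smul_eq_mul]
  have hGrad : kappaGradExplicit b k a t = fun j => (b:ℝ)⁻¹ * ∑ i : Fin b, G i (ιk j) := by
    funext j
    unfold kappaGradExplicit
    congr 1
    apply Finset.sum_congr rfl
    intro i _
    rw [hGcoord i j]
    rw [sum_Pis_eq hk1 (fun π => a i (π j) * Real.exp (∑ m : Fin (k - 1), t m * a i (π m))),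
      sum_Pis_eq hk1 (fun π => Real.exp (∑ m : Fin (k - 1), t m * a i (π m)))]
    rw [div_eq_inv_mul]
    congr 1
    apply Finset.sum_congr rfl
    intro σ _
    rw [mul_comm]
  set H : Fin k → ℝ := (b:ℝ)⁻¹ • ∑ i : Fin b, G i with hH
  have hHmem : H ∈ convexHull ℝ (permSet (Abar b k a)) := by
    have h0 : (∑ i : Fin b, G i) ∈ convexHull ℝ (permSet (fun r => ∑ i : Fin b, a i r)) :=
      sumMem hk0 a (fun i => (ha i).monotone) univ G (fun i _ => hGmem i)
    have h1 : H ∈ (b:ℝ)⁻¹ • convexHull ℝ (permSet (fun r => ∑ i : Fin b, a i r)) :=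
      Set.smul_mem_smul_set h0
    rw [← convexHull_smul] at h1
    refine convexHull_mono ?_ h1
    rintro x ⟨y, ⟨σ, rfl⟩, rfl⟩
    refine ⟨σ, ?_⟩
    funext r
    simp [Abar, smul_eq_mul]
  have hfinal : kappaGradExplicit b k a t = (LinearMap.funLeft ℝ ℝ ιk) H := by
    rw [hGrad]
    funext j
    simp only [LinearMap.funLeft_apply, hH, Pi.smul_apply, Finset.sum_apply, smul_eq_mul]
  rw [hfinal]
  have h2 : (LinearMap.funLeft ℝ ℝ ιk) H ∈
      (LinearMap.funLeft ℝ ℝ ιk) '' (convexHull ℝ (permSet (Abar b k a))) :=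
    Set.mem_image_of_mem _ hHmem
  rw [LinearMap.image_convexHull] at h2
  refine convexHull_mono ?_ h2
  rintro x ⟨y, ⟨σ, rfl⟩, rfl⟩
  refine ⟨fun j => σ (ιk j), ?_, rfl⟩
  simp only [Pis, Finset.mem_filter, Finset.mem_univ, true_and]
  exact σ.injective.comp (Fin.castLE_injective _)

end Aux

/-- for every t, every l ∈ {1,…,k−1} and any l distinct indices
j₁,…,j_l ∈ {1,…,k−1}, Σ_{j=1}^{l} Ā_j < Σ_{m=1}^{l} ∂κ/∂t_{j_m}(t) < Σ_{j=k−l+1}^{k} Ā_j;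
in particular the image of the gradient map κ′ lies in the polytope 𝒫. -/
theorem stmt_1 (b k : ℕ) (hb : 1 ≤ b) (hk : 2 ≤ k) (a : Fin b → Fin k → ℝ)
    (ha : ∀ i : Fin b, StrictMono (a i)) :
    (∀ t : Fin (k - 1) → ℝ, ∀ l : ℕ, 1 ≤ l → l ≤ k - 1 →
      ∀ s : Fin l → Fin (k - 1), Function.Injective s →
        (∑ j ∈ Finset.univ.filter (fun j : Fin k => (j : ℕ) < l), Abar b k a j)
            < (∑ m : Fin l, kappaGradExplicit b k a t (s m)) ∧
        (∑ m : Fin l, kappaGradExplicit b k a t (s m))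
            < ∑ j ∈ Finset.univ.filter (fun j : Fin k => k - l ≤ (j : ℕ)), Abar b k a j) ∧
    (∀ t : Fin (k - 1) → ℝ, kappaGradExplicit b k a t ∈ PolyP b k a) := by
  refine ⟨?_, ?_⟩
  · intro t l hl1 hl2 s hs
    exact part1 b k hb hk a ha t l hl1 hl2 s hs
  · intro t
    exact part2 b k hb hk a ha t
end

section
/- Every vertex Ā_π̂ (π̂ ∈ Π) of the polytope 𝒫 is a limit point of Ω; that is, Ā_π̂ lies in the topological closure of the image of the gradient map κ′ : ℝ^{k−1} → ℝ^{k−1}. -/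
open Finset

/-- The gradient map κ′ : ℝ^{k−1} → ℝ^{k−1} of κ, whose j-th component is the
partial derivative of κ in the j-th coordinate direction. -/
noncomputable def kappaGrad (b k : ℕ) (a : Fin b → Fin k → ℝ) (t : Fin (k - 1) → ℝ) :
    Fin (k - 1) → ℝ :=
  fun j => fderiv ℝ (kappa b k a) t (Pi.single j 1)

section Aux

open Finset Filter Topology


lemma snoc_inj {n : ℕ} {p : Fin n → Fin (n+1)} (hp : Function.Injective p) (m : Fin (n+1))
    (hm : ∀ j, p j ≠ m) : Function.Injective (Fin.snoc p m) := by
  intro x y h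
  rcases Fin.eq_castSucc_or_eq_last x with ⟨x', rfl⟩ | rfl <;>
    rcases Fin.eq_castSucc_or_eq_last y with ⟨y', rfl⟩ | rfl <;>
    simp [Fin.snoc_castSucc, Fin.snoc_last] at h ⊢
  · exact hp h
  · exact absurd h (hm x')
  · exact absurd h.symm (hm y')

lemma exists_missing {n : ℕ} {p : Fin n → Fin (n+1)} (hp : Function.Injective p) :
    ∃ m : Fin (n+1), ∀ j, p j ≠ m := by
  by_contra h
  push_neg at h
  have hsurj : Function.Surjective p := fun m => h m
  have := Fintype.card_le_of_surjective p hsurj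
  simp at this

/-- extension of injective p to a permutation of Fin (n+1). -/
noncomputable def extPerm {n : ℕ} {p : Fin n → Fin (n+1)} (hp : Function.Injective p)
    (m : Fin (n+1)) (hm : ∀ j, p j ≠ m) : Equiv.Perm (Fin (n+1)) :=
  Equiv.ofBijective (Fin.snoc p m)
    ((Finite.injective_iff_bijective).1 (snoc_inj hp m hm))

@[simp] lemma extPerm_castSucc {n : ℕ} {p : Fin n → Fin (n+1)} (hp : Function.Injective p)
    (m : Fin (n+1)) (hm : ∀ j, p j ≠ m) (j : Fin n) :
    extPerm hp m hm (Fin.castSucc j) = p j := by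
  simp [extPerm, Fin.snoc_castSucc]

@[simp] lemma extPerm_last {n : ℕ} {p : Fin n → Fin (n+1)} (hp : Function.Injective p)
    (m : Fin (n+1)) (hm : ∀ j, p j ≠ m) :
    extPerm hp m hm (Fin.last n) = m := by
  simp [extPerm, Fin.snoc_last]

/-- a strictly monotone permutation is the identity -/
lemma perm_eq_one_of_strictMono {n : ℕ} (ρ : Equiv.Perm (Fin n)) (h : StrictMono ⇑ρ) :
    ρ = 1 := by
  have h2 : StrictMono (id : Fin n → Fin n) := fun _ _ h => h
  have h3 : Set.range ⇑ρ = Set.range (id : Fin n → Fin n) := by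
    rw [ρ.surjective.range_eq, Set.range_id]
  have inst : WellFoundedLT (Fin n) := inferInstance
  have : ⇑ρ = id := (@StrictMono.range_inj (Fin n) (Fin n) _ _ inst _ _ h h2).1 h3
  ext x
  simp [this]

/-- Key combinatorial lemma: direction u making p̂ the unique maximizer. -/
lemma exists_direction {n : ℕ} (phat : Fin n → Fin (n+1)) (hphat : Function.Injective phat) :
    ∃ u : Fin n → ℝ, ∀ (c : Fin (n+1) → ℝ), StrictMono c →
      ∀ p : Fin n → Fin (n+1), Function.Injective p → p ≠ phat →
        ∑ j, u j * c (p j) < ∑ j, u j * c (phat j) := by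
  obtain ⟨m₀, hm₀⟩ := exists_missing hphat
  set v : Fin (n+1) → ℝ := fun m => (m : ℝ) - (m₀ : ℝ) with hv
  have hvmono : StrictMono v := by
    intro x y hxy
    simp only [hv, sub_lt_sub_iff_right]
    exact_mod_cast hxy
  refine ⟨fun j => v (phat j), fun c hc p hp hne => ?_⟩
  obtain ⟨m₁, hm₁⟩ := exists_missing hp
  set σh := extPerm hphat m₀ hm₀ with hσh
  set σp := extPerm hp m₁ hm₁ with hσp
  set ρ : Equiv.Perm (Fin (n+1)) := σh.symm.trans σp with hρ
  have hvm₀ : v m₀ = 0 := by simp [hv]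
  -- LHS equals ∑ over Fin (n+1)
  have hcomp : ∀ m, ρ (σh m) = σp m := fun m => by simp [hρ]
  have hL : ∑ j, v (phat j) * c (p j) = ∑ m : Fin (n+1), v m * c (ρ m) := by
    rw [← Equiv.sum_comp σh (fun m => v m * c (ρ m))]
    simp only [hcomp]
    rw [Fin.sum_univ_castSucc]
    simp [hσh, hσp, hvm₀, extPerm_castSucc, extPerm_last]
  have hR : ∑ j, v (phat j) * c (phat j) = ∑ m : Fin (n+1), v m * c m := by
    rw [← Equiv.sum_comp σh (fun m => v m * c m)]
    rw [Fin.sum_univ_castSucc]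
    simp [hσh, hvm₀, extPerm_castSucc, extPerm_last]
  rw [hL, hR]
  have hmono : Monovary v c := fun x y hxy => (hvmono.le_iff_le).2 (hc.lt_iff_lt.1 hxy).le
  have key := hmono.sum_smul_comp_perm_lt_sum_smul_iff (σ := ρ)
  simp only [smul_eq_mul] at key
  rw [key]
  -- show ¬ Monovary v (c ∘ ρ)
  intro hmv
  have hρmono : StrictMono ⇑ρ := by
    intro x y hxy
    rcases lt_trichotomy (ρ x) (ρ y) with h | h | h
    · exact h
    · exact absurd (ρ.injective h) hxy.ne
    · have : v y ≤ v x := hmv (hc h)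
      exact absurd ((hvmono.le_iff_le).1 this) (not_le.2 hxy)
  have hρ1 : ρ = 1 := perm_eq_one_of_strictMono ρ hρmono
  apply hne
  funext j
  have h1 : ρ (σh (Fin.castSucc j)) = σh (Fin.castSucc j) := by rw [hρ1]; rfl
  have h2 : ρ (σh (Fin.castSucc j)) = σp (Fin.castSucc j) := by
    simp [hρ]
  rw [h2] at h1
  simpa [hσh, hσp, extPerm_castSucc] using h1

/-- the linear functional t ↦ ∑ j, t j * a i (p j) as a CLM -/
noncomputable def linF {n b : ℕ} (a : Fin b → Fin (n+1) → ℝ) (i : Fin b)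
    (p : Fin n → Fin (n+1)) : (Fin n → ℝ) →L[ℝ] ℝ :=
  ∑ j, a i (p j) • ContinuousLinearMap.proj j

lemma linF_apply {n b : ℕ} (a : Fin b → Fin (n+1) → ℝ) (i : Fin b)
    (p : Fin n → Fin (n+1)) (t : Fin n → ℝ) :
    linF a i p t = ∑ j, t j * a i (p j) := by
  simp [linF, mul_comm]

lemma linF_single {n b : ℕ} (a : Fin b → Fin (n+1) → ℝ) (i : Fin b)
    (p : Fin n → Fin (n+1)) (j : Fin n) :
    linF a i p (Pi.single j 1) = a i (p j) := by
  rw [linF_apply]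
  rw [Finset.sum_eq_single j]
  · simp
  · intro j' _ hj'
    simp [Pi.single_eq_of_ne hj']
  · simp

lemma S_pos {n b : ℕ} (a : Fin b → Fin (n+1) → ℝ) (i : Fin b) (t : Fin n → ℝ) :
    0 < ∑ p ∈ Pis (n+1), Real.exp (linF a i p t) := by
  apply Finset.sum_pos
  · intro p _
    exact Real.exp_pos _
  · refine ⟨Fin.castSucc, ?_⟩
    simp [Pis, Fin.castSucc_injective]

lemma hasFDerivAt_kappa {n b : ℕ} (a : Fin b → Fin (n+1) → ℝ) (t : Fin n → ℝ) :
    HasFDerivAt (kappa b (n+1) a)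
      ((b : ℝ)⁻¹ • ∑ i : Fin b, (∑ p ∈ Pis (n+1), Real.exp (linF a i p t))⁻¹ •
        ∑ p ∈ Pis (n+1), Real.exp (linF a i p t) • linF a i p) t := by
  have hexp : ∀ (i : Fin b) (p : Fin n → Fin (n+1)),
      HasFDerivAt (fun s : Fin n → ℝ => Real.exp (∑ j, s j * a i (p j)))
        (Real.exp (linF a i p t) • linF a i p) t := by
    intro i p
    have hfun : (fun s : Fin n → ℝ => ∑ j, s j * a i (p j)) = ⇑(linF a i p) := by
      funext s; rw [linF_apply]
    have := ((linF a i p).hasFDerivAt (x := t)).exp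
    simp only [← hfun] at this
    rw [linF_apply]
    exact this
  have hS : ∀ i : Fin b, HasFDerivAt
      (fun s : Fin n → ℝ => ∑ p ∈ Pis (n+1), Real.exp (∑ j, s j * a i (p j)))
      (∑ p ∈ Pis (n+1), Real.exp (linF a i p t) • linF a i p) t := by
    intro i
    exact HasFDerivAt.fun_sum (fun p _ => hexp i p)
  have hlog : ∀ i : Fin b, HasFDerivAt
      (fun s : Fin n → ℝ => Real.log (((n+1).factorial : ℝ)⁻¹ *
        ∑ p ∈ Pis (n+1), Real.exp (∑ j, s j * a i (p j))))
      ((∑ p ∈ Pis (n+1), Real.exp (linF a i p t))⁻¹ •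
        ∑ p ∈ Pis (n+1), Real.exp (linF a i p t) • linF a i p) t := by
    intro i
    have hc : (((n+1).factorial : ℝ))⁻¹ ≠ 0 := by
      positivity
    have hmul := (hS i).const_mul (((n+1).factorial : ℝ)⁻¹)
    have hpos : ((n+1).factorial : ℝ)⁻¹ *
        ∑ p ∈ Pis (n+1), Real.exp (∑ j, t j * a i (p j)) ≠ 0 := by
      have h1 := S_pos a i t
      simp only [linF_apply] at h1
      positivity
    have := hmul.log hpos
    refine this.congr_fderiv ?_
    rw [smul_smul]
    congr 1
    have h1 : (∑ p ∈ Pis (n+1), Real.exp (∑ j, t j * a i (p j)))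
        = ∑ p ∈ Pis (n+1), Real.exp (linF a i p t) := by
      simp only [linF_apply]
    rw [h1]
    rw [mul_inv]
    rw [mul_comm (((n+1).factorial : ℝ)⁻¹)⁻¹, mul_assoc]
    rw [inv_mul_cancel₀ hc, mul_one]
  have hsum := HasFDerivAt.fun_sum (fun i (_ : i ∈ Finset.univ) => hlog i)
  have := hsum.const_mul ((b : ℝ)⁻¹)
  exact this

lemma kappaGrad_eq {n b : ℕ} (a : Fin b → Fin (n+1) → ℝ) (t : Fin n → ℝ) (j : Fin n) :
    kappaGrad b (n+1) a t j = (b : ℝ)⁻¹ * ∑ i : Fin b,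
      (∑ p ∈ Pis (n+1), Real.exp (linF a i p t))⁻¹ *
        ∑ p ∈ Pis (n+1), Real.exp (linF a i p t) * a i (p j) := by
  show fderiv ℝ (kappa b (n+1) a) t (Pi.single j 1) = _
  rw [(hasFDerivAt_kappa a t).fderiv]
  simp only [ContinuousLinearMap.smul_apply, ContinuousLinearMap.coe_sum', Finset.sum_apply,
    smul_eq_mul]
  congr 1
  refine Finset.sum_congr rfl fun i _ => ?_
  congr 1
  refine Finset.sum_congr rfl fun p _ => ?_
  exact congrArg (fun z => Real.exp ((linF a i p) t) * z) (linF_single a i p j)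


lemma tendsto_softmax {ι : Type*} (s : Finset ι) [DecidableEq ι] (phat : ι) (hphat : phat ∈ s)
    (w d : ι → ℝ) (hd : ∀ p ∈ s, p ≠ phat → d p < d phat) :
    Tendsto (fun x : ℝ => (∑ p ∈ s, Real.exp (x * d p) * w p) / ∑ p ∈ s, Real.exp (x * d p))
      atTop (𝓝 (w phat)) := by
  have key : ∀ p ∈ s, Tendsto (fun x : ℝ => Real.exp (x * (d p - d phat))) atTop
      (𝓝 (if p = phat then 1 else 0)) := by
    intro p hp
    by_cases hcase : p = phat
    · subst hcase
      simp only [sub_self, mul_zero, Real.exp_zero, if_pos rfl]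
      exact tendsto_const_nhds
    · rw [if_neg hcase]
      have hneg : d p - d phat < 0 := sub_neg.2 (hd p hp hcase)
      have h1 : Tendsto (fun x : ℝ => x * (d p - d phat)) atTop atBot :=
        (tendsto_mul_const_atBot_of_neg hneg).2 tendsto_id
      exact Real.tendsto_exp_atBot.comp h1
  have hN : Tendsto (fun x : ℝ => ∑ p ∈ s, Real.exp (x * (d p - d phat)) * w p) atTop
      (𝓝 (w phat)) := by
    have := tendsto_finset_sum s (fun p hp => (key p hp).mul_const (w p))
    have hsum : ∑ p ∈ s, (if p = phat then (1:ℝ) else 0) * w p = w phat := by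
      rw [Finset.sum_eq_single phat]
      · simp
      · intro p _ hp; simp [if_neg hp]
      · intro h; exact absurd hphat h
    rwa [hsum] at this
  have hD : Tendsto (fun x : ℝ => ∑ p ∈ s, Real.exp (x * (d p - d phat))) atTop (𝓝 1) := by
    have := tendsto_finset_sum s (fun p hp => key p hp)
    have hsum : ∑ p ∈ s, (if p = phat then (1:ℝ) else 0) = 1 := by
      rw [Finset.sum_eq_single phat]
      · simp
      · intro p _ hp; simp [if_neg hp]
      · intro h; exact absurd hphat h
    rwa [hsum] at this
  have heq : ∀ x : ℝ, (∑ p ∈ s, Real.exp (x * d p) * w p) / ∑ p ∈ s, Real.exp (x * d p)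
      = (∑ p ∈ s, Real.exp (x * (d p - d phat)) * w p) / ∑ p ∈ s, Real.exp (x * (d p - d phat)) := by
    intro x
    have hfac : ∀ p, Real.exp (x * d p) = Real.exp (x * d phat) * Real.exp (x * (d p - d phat)) := by
      intro p
      rw [← Real.exp_add]
      ring_nf
    have h1 : ∑ p ∈ s, Real.exp (x * d p) * w p
        = Real.exp (x * d phat) * ∑ p ∈ s, Real.exp (x * (d p - d phat)) * w p := by
      rw [Finset.mul_sum]
      exact Finset.sum_congr rfl fun p _ => by rw [hfac p, mul_assoc]
    have h2 : ∑ p ∈ s, Real.exp (x * d p)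
        = Real.exp (x * d phat) * ∑ p ∈ s, Real.exp (x * (d p - d phat)) := by
      rw [Finset.mul_sum]
      exact Finset.sum_congr rfl fun p _ => hfac p
    rw [h1, h2, mul_div_mul_left _ _ (Real.exp_ne_zero _)]
  have := hN.div hD one_ne_zero
  simp only [div_one] at this
  exact Tendsto.congr (fun x => (heq x).symm) this

end Aux

open Filter Topology

set_option maxHeartbeats 1000000 in
/-- every vertex Ā_π̂ (π̂ ∈ Π) of 𝒫 lies in the topological closure of
the image of the gradient map κ′. -/
theorem stmt_3 (b k : ℕ) (hb : 1 ≤ b) (hk : 2 ≤ k) (a : Fin b → Fin k → ℝ)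
    (ha : ∀ i : Fin b, StrictMono (a i)) :
    ∀ π ∈ Pis k, AbarPi b k a π ∈ closure (Set.range (kappaGrad b k a)) := by
  obtain ⟨n, rfl⟩ : ∃ n, k = n + 1 := ⟨k - 1, by omega⟩
  intro phat hphat
  have hinj : Function.Injective phat := by
    simpa [Pis] using hphat
  obtain ⟨u, hu⟩ := exists_direction phat hinj
  refine mem_closure_of_tendsto (f := fun x : ℝ => kappaGrad b (n+1) a (x • u))
    (b := (atTop : Filter ℝ)) ?_ (Eventually.of_forall fun x => Set.mem_range_self _)
  rw [tendsto_pi_nhds]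
  intro j
  simp only [AbarPi, Abar, kappaGrad_eq]
  refine Tendsto.const_mul _ (tendsto_finset_sum _ fun i _ => ?_)
  have hlin : ∀ (p : Fin n → Fin (n+1)) (x : ℝ), linF a i p (x • u) = x * linF a i p u := by
    intro p x; rw [map_smul]; simp
  have hform : ∀ x : ℝ, (∑ p ∈ Pis (n+1), Real.exp (linF a i p (x • u)))⁻¹ *
      ∑ p ∈ Pis (n+1), Real.exp (linF a i p (x • u)) * a i (p j)
      = (∑ p ∈ Pis (n+1), Real.exp (x * linF a i p u) * a i (p j)) /
        ∑ p ∈ Pis (n+1), Real.exp (x * linF a i p u) := by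
    intro x
    simp only [hlin, inv_mul_eq_div]
  refine Tendsto.congr (fun x => (hform x).symm) ?_
  refine tendsto_softmax (Pis (n+1)) phat hphat (fun p => a i (p j))
    (fun p => linF a i p u) ?_
  intro p hp hne
  have hpinj : Function.Injective p := by simpa [Pis] using hp
  have h := hu (a i) (ha i) p hpinj hne
  simp only [linF_apply]
  exact h
end

section
/- For every π̂ ∈ Π, the value of Λ at the vertex Ā_π̂ is log k!; that is, sup_{t∈ℝ^{k−1}} ( tᵀ Ā_π̂ − κ(t) ) = log(k!). -/
open Finset

private lemma rearr_aux {n : ℕ} {f x : Fin n → ℝ} (hf : StrictMono f) (hx : StrictMono x)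
    {σ : Equiv.Perm (Fin n)} (hσ : σ ≠ 1) :
    ∑ m, f m * x (σ m) < ∑ m, f m * x m := by
  have hfg : Monovary f x := fun i j h => (hf (hx.lt_iff_lt.1 h)).le
  have key : (∑ i, f i • x (σ i)) < (∑ i, f i • x i) ↔ ¬ Monovary f (x ∘ σ) :=
    hfg.sum_smul_comp_perm_lt_sum_smul_iff
  simp only [smul_eq_mul] at key
  refine key.2 ?_
  intro hM
  have hmono : StrictMono ⇑σ := by
    intro i j hij
    rcases lt_trichotomy (σ i) (σ j) with h | h | h
    · exact h
    · exact absurd (σ.injective h) (ne_of_lt hij)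
    · have h2 : f j ≤ f i := hM (show (x ∘ σ) j < (x ∘ σ) i from hx h)
      exact absurd h2 (not_le.2 (hf hij))
  have inst : WellFoundedLT (Fin n) := inferInstance
  have hid : ⇑σ = id :=
    (@StrictMono.range_inj (Fin n) (Fin n) inferInstance inferInstance inst _ _ hmono
      strictMono_id).1 (by rw [Set.range_id]; exact σ.surjective.range_eq)
  exact hσ (Equiv.ext fun m => congrFun hid m)

private lemma extend_perm {k : ℕ} (hk : 1 ≤ k) {π : Fin (k - 1) → Fin k}
    (hπ : Function.Injective π) :
    ∃ σ : Equiv.Perm (Fin k), ∀ j : Fin (k - 1), σ (Fin.castLE (Nat.sub_le k 1) j) = π j := by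
  have hcompl : ((Finset.univ.image π)ᶜ : Finset (Fin k)).Nonempty := by
    rw [← Finset.card_pos, Finset.card_compl, Finset.card_image_of_injective _ hπ]
    simp only [Fintype.card_fin, Finset.card_univ]
    omega
  obtain ⟨m₁, hm₁c⟩ := hcompl
  have hm₁ : ∀ j, π j ≠ m₁ := by
    intro j h
    exact (Finset.mem_compl.1 hm₁c) (h ▸ Finset.mem_image_of_mem π (Finset.mem_univ j))
  set F : Fin k → Fin k := fun m => if h : (m : ℕ) < k - 1 then π ⟨m, h⟩ else m₁ with hF
  have hFinj : Function.Injective F := by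
    intro m m' h
    simp only [hF] at h
    split_ifs at h with h1 h2 h2
    · have h3 := hπ h
      rw [Fin.mk.injEq] at h3
      exact Fin.ext h3
    · exact absurd h (hm₁ _)
    · exact absurd h.symm (hm₁ _)
    · omega
  refine ⟨Equiv.ofBijective F (Finite.injective_iff_bijective.1 hFinj), ?_⟩
  intro j
  show F (Fin.castLE (Nat.sub_le k 1) j) = π j
  have hj : ((Fin.castLE (Nat.sub_le k 1) j : Fin k) : ℕ) < k - 1 := j.isLt
  simp only [hF, dif_pos hj]
  exact congrArg π (Fin.ext rfl)

private lemma sep_lemma {k : ℕ} (hk : 2 ≤ k) {π' π : Fin (k - 1) → Fin k}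
    (hπ' : Function.Injective π') (hπ : Function.Injective π) (hne : π ≠ π')
    {m₀ : Fin k} (hm₀ : ∀ j, π' j ≠ m₀) {x : Fin k → ℝ} (hx : StrictMono x) :
    ∑ j, (((π' j : ℕ) : ℝ) - ((m₀ : ℕ) : ℝ)) * x (π j) <
      ∑ j, (((π' j : ℕ) : ℝ) - ((m₀ : ℕ) : ℝ)) * x (π' j) := by
  have hk1 : 1 ≤ k := by omega
  obtain ⟨σ₁, hσ₁⟩ := extend_perm hk1 hπ
  obtain ⟨σ₂, hσ₂⟩ := extend_perm hk1 hπ'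
  set σ : Equiv.Perm (Fin k) := σ₂.symm.trans σ₁ with hσdef
  have hσj : ∀ j, σ (π' j) = π j := by
    intro j
    have h2 : σ₂.symm (π' j) = Fin.castLE (Nat.sub_le k 1) j := by
      rw [Equiv.symm_apply_eq]; exact (hσ₂ j).symm
    simp only [hσdef, Equiv.trans_apply, h2, hσ₁]
  set f : Fin k → ℝ := fun m => ((m : ℕ) : ℝ) - ((m₀ : ℕ) : ℝ) with hfdef
  have hf : StrictMono f := by
    intro i j hij
    have : (i : ℕ) < (j : ℕ) := hij
    simp only [hfdef]
    have : ((i : ℕ) : ℝ) < ((j : ℕ) : ℝ) := by exact_mod_cast this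
    linarith
  have hm₀mem : m₀ ∉ Finset.univ.image π' := by
    intro hmem
    obtain ⟨j, _, hj⟩ := Finset.mem_image.1 hmem
    exact hm₀ j hj
  have huniv : (Finset.univ : Finset (Fin k)) = insert m₀ (Finset.univ.image π') := by
    symm
    apply Finset.eq_univ_of_card
    rw [Finset.card_insert_of_notMem hm₀mem, Finset.card_image_of_injective _ hπ']
    simp only [Finset.card_univ, Fintype.card_fin]
    omega
  have hsum : ∀ y : Fin k → ℝ, ∑ m : Fin k, f m * y m = ∑ j, f (π' j) * y (π' j) := by
    intro y
    conv_lhs => rw [huniv]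
    rw [Finset.sum_insert hm₀mem, Finset.sum_image (fun i _ j _ h => hπ' h)]
    have : f m₀ = 0 := by simp [hfdef]
    rw [this, zero_mul, zero_add]
  have hσne : σ ≠ 1 := by
    intro h
    apply hne
    funext j
    have := hσj j
    rw [h] at this
    simpa using this.symm
  have key := rearr_aux hf hx hσne
  rw [hsum x] at key
  have h2 : ∑ m : Fin k, f m * x (σ m) = ∑ j, f (π' j) * x (π j) := by
    rw [hsum (fun m => x (σ m))]
    exact Finset.sum_congr rfl fun j _ => by rw [hσj j]
  rw [h2] at key
  exact key


private lemma abar_swap (b k : ℕ) (a : Fin b → Fin k → ℝ) (π : Fin (k - 1) → Fin k)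
    (t : Fin (k - 1) → ℝ) :
    ∑ j, t j * AbarPi b k a π j = (b : ℝ)⁻¹ * ∑ i, ∑ j, t j * a i (π j) := by
  unfold AbarPi Abar
  simp_rw [Finset.mul_sum]
  rw [Finset.sum_comm]
  exact Finset.sum_congr rfl fun i _ => Finset.sum_congr rfl fun j _ => by ring

private lemma exp_single_le_s4 {ι : Type*} (s : Finset ι) (f : ι → ℝ) {x : ι} (hx : x ∈ s) :
    Real.exp (f x) ≤ ∑ y ∈ s, Real.exp (f y) :=
  Finset.single_le_sum (fun _ _ => (Real.exp_pos _).le) hx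

private lemma log_helper {c S u : ℝ} (hc : 0 < c) (hS : Real.exp u ≤ S) :
    u - Real.log c ≤ Real.log (c⁻¹ * S) := by
  have hS0 : 0 < S := lt_of_lt_of_le (Real.exp_pos u) hS
  rw [Real.log_mul (by positivity) (ne_of_gt hS0), Real.log_inv]
  have h2 : u ≤ Real.log S := (Real.le_log_iff_exp_le hS0).2 hS
  linarith

private lemma lamArg_le (b k : ℕ) (hb : 1 ≤ b) (a : Fin b → Fin k → ℝ)
    {π : Fin (k - 1) → Fin k} (hπ : π ∈ Pis k) (t : Fin (k - 1) → ℝ) :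
    lamArg b k a (AbarPi b k a π) t ≤ Real.log (Nat.factorial k) := by
  have hbpos : (0 : ℝ) < b := by exact_mod_cast Nat.pos_of_ne_zero (by omega)
  have hkf : (0 : ℝ) < (Nat.factorial k : ℝ) := by exact_mod_cast Nat.factorial_pos k
  unfold lamArg kappa
  rw [abar_swap, ← mul_sub, ← Finset.sum_sub_distrib]
  have key : ∀ i : Fin b, (∑ j, t j * a i (π j)) -
      Real.log ((Nat.factorial k : ℝ)⁻¹ *
        ∑ π' ∈ Pis k, Real.exp (∑ j, t j * a i (π' j))) ≤ Real.log (Nat.factorial k) := by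
    intro i
    have h := log_helper hkf (exp_single_le_s4 (Pis k) (fun π' => ∑ j, t j * a i (π' j)) hπ)
    linarith
  have hsum := Finset.sum_le_sum (fun i (_ : i ∈ Finset.univ) => key i)
  calc (b : ℝ)⁻¹ * ∑ i, ((∑ j, t j * a i (π j)) -
        Real.log ((Nat.factorial k : ℝ)⁻¹ *
          ∑ π' ∈ Pis k, Real.exp (∑ j, t j * a i (π' j))))
      ≤ (b : ℝ)⁻¹ * ∑ _i : Fin b, Real.log (Nat.factorial k) :=
        mul_le_mul_of_nonneg_left hsum (by positivity)
    _ = Real.log (Nat.factorial k) := by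
        rw [Finset.sum_const, Finset.card_univ, Fintype.card_fin, nsmul_eq_mul]
        field_simp

private lemma log_sum_exp {ι : Type*} {s : Finset ι} (hs : s.Nonempty) (v : ι → ℝ)
    (u c C : ℝ) (hC : 0 < C) :
    Real.log (C⁻¹ * ∑ p ∈ s, Real.exp (c * v p)) =
      -Real.log C + c * u + Real.log (∑ p ∈ s, Real.exp (c * (v p - u))) := by
  have hpos : 0 < ∑ p ∈ s, Real.exp (c * (v p - u)) :=
    Finset.sum_pos (fun p _ => Real.exp_pos _) hs
  have hfact : ∑ p ∈ s, Real.exp (c * v p) =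
      Real.exp (c * u) * ∑ p ∈ s, Real.exp (c * (v p - u)) := by
    rw [Finset.mul_sum]
    refine Finset.sum_congr rfl fun p _ => ?_
    rw [← Real.exp_add]
    congr 1
    ring
  rw [hfact, Real.log_mul (inv_ne_zero hC.ne') (by positivity),
    Real.log_mul (Real.exp_ne_zero _) hpos.ne', Real.log_inv, Real.log_exp]
  ring

/-- for every π̂ ∈ Π, Λ(Ā_π̂) = sup_t ( tᵀ Ā_π̂ − κ(t) ) = log k!. -/
theorem stmt_4 (b k : ℕ) (hb : 1 ≤ b) (hk : 2 ≤ k) (a : Fin b → Fin k → ℝ)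
    (ha : ∀ i : Fin b, StrictMono (a i)) :
    ∀ π ∈ Pis k, Lam b k a (AbarPi b k a π) = ((Real.log (k.factorial) : ℝ) : EReal) := by
  intro π hπ
  have hπinj : Function.Injective π := (Finset.mem_filter.1 hπ).2
  have hbpos : (0 : ℝ) < b := by exact_mod_cast Nat.pos_of_ne_zero (by omega)
  have hkf : (0 : ℝ) < (Nat.factorial k : ℝ) := by exact_mod_cast Nat.factorial_pos k
  have hcompl : ((Finset.univ.image π)ᶜ : Finset (Fin k)).Nonempty := by
    rw [← Finset.card_pos, Finset.card_compl, Finset.card_image_of_injective _ hπinj]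
    simp only [Fintype.card_fin, Finset.card_univ]
    omega
  obtain ⟨m₀, hm₀c⟩ := hcompl
  have hm₀ : ∀ j, π j ≠ m₀ := by
    intro j h
    exact (Finset.mem_compl.1 hm₀c) (h ▸ Finset.mem_image_of_mem π (Finset.mem_univ j))
  set x : Fin (k - 1) → ℝ := AbarPi b k a π with hx
  set t₀ : Fin (k - 1) → ℝ := fun j => ((π j : ℕ) : ℝ) - ((m₀ : ℕ) : ℝ) with ht₀
  set v : Fin b → (Fin (k - 1) → Fin k) → ℝ := fun i π' => ∑ j, t₀ j * a i (π' j) with hv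
  set g : Fin b → ℝ → ℝ :=
    fun i c => ∑ π' ∈ Pis k, Real.exp (c * (v i π' - v i π)) with hg
  have hPne : (Pis k).Nonempty := ⟨π, hπ⟩
  have heq : ∀ c : ℝ, lamArg b k a x (c • t₀) =
      Real.log (Nat.factorial k) - (b : ℝ)⁻¹ * ∑ i, Real.log (g i c) := by
    intro c
    have hsmul : ∀ w : Fin (k - 1) → ℝ,
        ∑ j, (c • t₀) j * w j = c * ∑ j, t₀ j * w j := by
      intro w
      rw [Finset.mul_sum]
      exact Finset.sum_congr rfl fun j _ => by simp only [Pi.smul_apply, smul_eq_mul]; ring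
    unfold lamArg kappa
    have hA : ∀ i : Fin b,
        ∑ π' ∈ Pis k, Real.exp (∑ j, (c • t₀) j * a i (π' j)) =
          ∑ π' ∈ Pis k, Real.exp (c * v i π') :=
      fun i => Finset.sum_congr rfl fun π' _ => by rw [hsmul (fun j => a i (π' j))]
    have hlog : ∀ i : Fin b,
        Real.log ((Nat.factorial k : ℝ)⁻¹ *
            ∑ π' ∈ Pis k, Real.exp (∑ j, (c • t₀) j * a i (π' j))) =
          -Real.log (Nat.factorial k) + c * v i π + Real.log (g i c) := by
      intro i
      rw [hA i]
      exact log_sum_exp hPne (v i) (v i π) c _ hkf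
    rw [Finset.sum_congr rfl (fun i _ => hlog i), hsmul x]
    have hT : ∑ j, t₀ j * x j = (b : ℝ)⁻¹ * ∑ i, v i π := by
      rw [hx]
      exact abar_swap b k a π t₀
    rw [hT]
    have hsplit : ∑ i : Fin b,
        (-Real.log (Nat.factorial k) + c * v i π + Real.log (g i c)) =
          (b : ℝ) * (-Real.log (Nat.factorial k)) + c * (∑ i, v i π) +
            ∑ i, Real.log (g i c) := by
      rw [Finset.sum_add_distrib, Finset.sum_add_distrib, Finset.sum_const,
        Finset.card_univ, Fintype.card_fin, nsmul_eq_mul, ← Finset.mul_sum]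
    rw [hsplit]
    field_simp
    ring
  have hsep : ∀ (i : Fin b), ∀ π' ∈ Pis k, π' ≠ π → v i π' - v i π < 0 := by
    intro i π' hπ' hne
    have hπ'inj : Function.Injective π' := (Finset.mem_filter.1 hπ').2
    have h := sep_lemma hk hπinj hπ'inj hne hm₀ (ha i)
    simp only [hv, ht₀]
    linarith
  have hgi : ∀ i : Fin b, Filter.Tendsto (fun c => g i c) Filter.atTop (nhds 1) := by
    intro i
    have h1 : Filter.Tendsto (fun c => ∑ π' ∈ Pis k, Real.exp (c * (v i π' - v i π)))
        Filter.atTop (nhds (∑ π' ∈ Pis k, if π' = π then (1 : ℝ) else 0)) := by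
      apply tendsto_finset_sum
      intro π' hπ'
      by_cases hcase : π' = π
      · simp only [hcase, if_true, sub_self, mul_zero, Real.exp_zero]
        exact tendsto_const_nhds
      · simp only [hcase, if_false]
        have hd : v i π' - v i π < 0 := hsep i π' hπ' hcase
        exact Real.tendsto_exp_atBot.comp (Filter.tendsto_id.atTop_mul_const_of_neg hd)
    rwa [Finset.sum_ite_eq' (Pis k) π (fun _ => (1 : ℝ)), if_pos hπ] at h1
  have hlogg : Filter.Tendsto (fun c => ∑ i, Real.log (g i c)) Filter.atTop (nhds 0) := by
    have h2 := tendsto_finset_sum (Finset.univ : Finset (Fin b))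
      (fun i _ => (Real.continuousAt_log one_ne_zero).tendsto.comp (hgi i))
    simpa [Real.log_one] using h2
  have htend : Filter.Tendsto (fun c : ℝ => lamArg b k a x (c • t₀)) Filter.atTop
      (nhds (Real.log (Nat.factorial k))) := by
    have h2 : Filter.Tendsto
        (fun c : ℝ => Real.log (Nat.factorial k) - (b : ℝ)⁻¹ * ∑ i, Real.log (g i c))
        Filter.atTop (nhds (Real.log (Nat.factorial k) - (b : ℝ)⁻¹ * 0)) :=
      tendsto_const_nhds.sub (hlogg.const_mul _)
    rw [mul_zero, sub_zero] at h2
    exact h2.congr fun c => (heq c).symm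
  unfold Lam
  apply le_antisymm
  · exact iSup_le fun t => EReal.coe_le_coe_iff.2 (lamArg_le b k hb a hπ t)
  · have h1 : Filter.Tendsto (fun c : ℝ => ((lamArg b k a x (c • t₀) : ℝ) : EReal))
        Filter.atTop (nhds ((Real.log (Nat.factorial k) : ℝ) : EReal)) :=
      (continuous_coe_real_ereal.tendsto _).comp htend
    exact le_of_tendsto h1 (Filter.Eventually.of_forall fun c =>
      le_iSup (fun t => ((lamArg b k a x t : ℝ) : EReal)) (c • t₀))
end
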